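/- arXiv:2510.11969 — 4 statements merged into one kernel-verified Lean document; each statement's English description precedes it below -/
import Mathlib

section
/- Let X be a topologically mixing d-dimensional subshift over a finite alphabet, with d > 1. If the projective n-strip ρ_n(X) is cohomologically trivial for every n ≥ 1, then X is cohomologically trivial. -/
/-- The shift action on configurations: `(shiftc n x) j = x (n + j)`. -/
def shiftc {A : Type} {d : ℕ} (n : Fin d → ℤ) (x : (Fin d → ℤ) → A) : (Fin d → ℤ) → A :=
  fun j => x (n + j)

/-- The product topology on the full shift, the alphabet being discrete. -/
def cfgTop (A : Type) (d : ℕ) : TopologicalSpace ((Fin d → ℤ) → A) :=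
  @Pi.topologicalSpace (Fin d → ℤ) (fun _ => A) (fun _ => ⊥)

/-- Two configurations differ at only finitely many coordinates. -/
def FinDiff {A ι : Type} (x y : ι → A) : Prop := {n : ι | x n ≠ y n}.Finite

/-- The cocycle equation, on the points of a subshift `X`. -/
def IsCocycleOn {A : Type} (Γ : Type) [Group Γ] {d : ℕ} (X : Set ((Fin d → ℤ) → A))
    (c : (Fin d → ℤ) → ((Fin d → ℤ) → A) → Γ) : Prop :=
  ∀ (m n : Fin d → ℤ) (x : (Fin d → ℤ) → A), x ∈ X →
    c (m + n) x = c m (shiftc n x) * c n x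

/-- A continuous cocycle on a subshift `X` with values in a discrete group. -/
def ContinuousCocycleOn {A : Type} (Γ : Type) [Group Γ] {d : ℕ} (X : Set ((Fin d → ℤ) → A))
    (c : (Fin d → ℤ) → ((Fin d → ℤ) → A) → Γ) : Prop :=
  IsCocycleOn Γ X c ∧ ∀ n : Fin d → ℤ, @ContinuousOn _ _ (cfgTop A d) ⊥ (c n) X

/-- A cocycle is trivial when it is continuously cohomologous to a group homomorphism. -/
def IsTrivialCocycleOn {A : Type} (Γ : Type) [Group Γ] {d : ℕ} (X : Set ((Fin d → ℤ) → A))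
    (c : (Fin d → ℤ) → ((Fin d → ℤ) → A) → Γ) : Prop :=
  ∃ b : ((Fin d → ℤ) → A) → Γ, @ContinuousOn _ _ (cfgTop A d) ⊥ b X ∧
    ∃ h : (Fin d → ℤ) → Γ, (∀ m n : Fin d → ℤ, h (m + n) = h m * h n) ∧
      ∀ (n : Fin d → ℤ) (x : (Fin d → ℤ) → A), x ∈ X →
        c n x = (b (shiftc n x))⁻¹ * h n * b x

/-- A subshift is cohomologically trivial when every continuous cocycle on it,
with values in any discrete group, is trivial. -/
def CohomologicallyTrivial (A : Type) (d : ℕ) (X : Set ((Fin d → ℤ) → A)) : Prop :=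
  ∀ (Γ : Type) [Group Γ], ∀ c : (Fin d → ℤ) → ((Fin d → ℤ) → A) → Γ,
    ContinuousCocycleOn Γ X c → IsTrivialCocycleOn Γ X c

/-- Topological mixing of a `ℤ^d`-subshift `X` (with respect to the relative topology):
for all relatively open nonempty `U`, `W`, there is `N` such that
`σ^n U ∩ W ≠ ∅` whenever `|n|_∞ ≥ N`. -/
def SubshiftMixing (A : Type) (d : ℕ) (X : Set ((Fin d → ℤ) → A)) : Prop :=
  ∀ U W : Set ((Fin d → ℤ) → A), @IsOpen _ (cfgTop A d) U → @IsOpen _ (cfgTop A d) W →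
    (U ∩ X).Nonempty → (W ∩ X).Nonempty →
    ∃ N : ℕ, ∀ n : Fin d → ℤ, (∃ i, (N : ℤ) ≤ |n i|) → ∃ y ∈ U ∩ X, shiftc n y ∈ W ∩ X

/-- The projective `n`-strip of an `(e+1)`-dimensional subshift `X`. -/
def stripSetX {A : Type} (e n : ℕ) (X : Set ((Fin (e + 1) → ℤ) → A)) :
    Set ((Fin e → ℤ) → (Fin n → A)) :=
  {u | ∃ x ∈ X, ∀ (v : Fin e → ℤ) (k : Fin n), u v k = x (Fin.snoc v ((k : ℕ) : ℤ))}

/-! ### Auxiliary lemmas -/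

section Helpers
variable {α β : Type*} [t : TopologicalSpace α]

theorem contOn_bot_iff (f : α → β) (s : Set α) :
    @ContinuousOn α β t ⊥ f s ↔ ∀ x ∈ s, ∃ U, IsOpen U ∧ x ∈ U ∧ ∀ y ∈ U ∩ s, f y = f x := by
  letI : TopologicalSpace β := ⊥
  haveI : DiscreteTopology β := ⟨rfl⟩
  constructor
  · intro h x hx
    have hx' := h x hx
    rw [ContinuousWithinAt, nhds_discrete, Filter.tendsto_pure] at hx'
    rcases mem_nhdsWithin.1 hx' with ⟨U, hU, hxU, hsub⟩
    exact ⟨U, hU, hxU, fun y hy => hsub hy⟩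
  · intro h x hx
    rcases h x hx with ⟨U, hU, hxU, hconst⟩
    rw [ContinuousWithinAt, nhds_discrete, Filter.tendsto_pure]
    exact mem_nhdsWithin.2 ⟨U, hU, hxU, fun y hy => hconst y hy⟩

theorem contOn_bot_const {Γ : Type*} {s : Set α} (γ : Γ) :
    @ContinuousOn α Γ t ⊥ (fun _ => γ) s :=
  (contOn_bot_iff _ _).2 fun x hx => ⟨Set.univ, isOpen_univ, trivial, fun _ _ => rfl⟩

theorem contOn_bot_mul {Γ : Type*} [Group Γ] {f g : α → Γ} {s : Set α}
    (hf : @ContinuousOn α Γ t ⊥ f s) (hg : @ContinuousOn α Γ t ⊥ g s) :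
    @ContinuousOn α Γ t ⊥ (fun x => f x * g x) s := by
  rw [contOn_bot_iff] at *
  intro x hx
  rcases hf x hx with ⟨U, hU, hxU, hfc⟩
  rcases hg x hx with ⟨V, hV, hxV, hgc⟩
  exact ⟨U ∩ V, hU.inter hV, ⟨hxU, hxV⟩, fun y hy =>
    by rw [hfc y ⟨hy.1.1, hy.2⟩, hgc y ⟨hy.1.2, hy.2⟩]⟩

theorem contOn_bot_inv {Γ : Type*} [Group Γ] {f : α → Γ} {s : Set α}
    (hf : @ContinuousOn α Γ t ⊥ f s) :
    @ContinuousOn α Γ t ⊥ (fun x => (f x)⁻¹) s := by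
  rw [contOn_bot_iff] at *
  intro x hx
  rcases hf x hx with ⟨U, hU, hxU, hfc⟩
  exact ⟨U, hU, hxU, fun y hy => by rw [hfc y hy]⟩

theorem contOn_bot_congr {Γ : Type*} {f g : α → Γ} {s : Set α}
    (hf : @ContinuousOn α Γ t ⊥ f s) (h : ∀ x ∈ s, g x = f x) :
    @ContinuousOn α Γ t ⊥ g s := by
  rw [contOn_bot_iff] at *
  intro x hx
  rcases hf x hx with ⟨U, hU, hxU, hfc⟩
  exact ⟨U, hU, hxU, fun y hy => by rw [h y hy.2, h x hx, hfc y hy]⟩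

theorem contOn_bot_comp {γ : Type*} [t' : TopologicalSpace γ] {φ : γ → α} {f : α → β}
    {s' : Set γ} {s : Set α} (hφ : Continuous φ) (hmaps : Set.MapsTo φ s' s)
    (hf : @ContinuousOn α β t ⊥ f s) :
    @ContinuousOn γ β t' ⊥ (fun y => f (φ y)) s' := by
  rw [contOn_bot_iff] at *
  intro x hx
  rcases hf (φ x) (hmaps hx) with ⟨U, hU, hxU, hfc⟩
  exact ⟨φ ⁻¹' U, hU.preimage hφ, hxU, fun y hy => hfc (φ y) ⟨hy.1, hmaps hy.2⟩⟩

end Helpers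

section Cyl
variable {A : Type} {d : ℕ}

theorem cyl_open (F : Finset (Fin d → ℤ)) (x : (Fin d → ℤ) → A) :
    @IsOpen _ (cfgTop A d) {y | ∀ j ∈ F, y j = x j} := by
  letI : TopologicalSpace A := ⊥
  haveI : DiscreteTopology A := ⟨rfl⟩
  have : {y : (Fin d → ℤ) → A | ∀ j ∈ F, y j = x j}
      = ⋂ j ∈ F, (fun y : (Fin d → ℤ) → A => y j) ⁻¹' {x j} := by
    ext y; simp
  rw [show cfgTop A d = @Pi.topologicalSpace (Fin d → ℤ) (fun _ => A) (fun _ => ⊥) from rfl, this]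
  exact isOpen_biInter_finset fun j _ => (continuous_apply j).isOpen_preimage _ trivial

theorem exists_window [Finite A] {β : Type} (X : Set ((Fin d → ℤ) → A))
    (hX : @IsClosed _ (cfgTop A d) X) (f : ((Fin d → ℤ) → A) → β)
    (hf : @ContinuousOn _ _ (cfgTop A d) ⊥ f X) :
    ∃ F : Finset (Fin d → ℤ), ∀ x ∈ X, ∀ y ∈ X, (∀ j ∈ F, x j = y j) → f x = f y := by
  classical
  letI : TopologicalSpace A := ⊥
  haveI : DiscreteTopology A := ⟨rfl⟩
  haveI : CompactSpace A := Finite.compactSpace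
  haveI : @CompactSpace _ (cfgTop A d) := (Pi.compactSpace : CompactSpace ((Fin d → ℤ) → A))
  have hcomp : IsCompact X := hX.isCompact
  rw [contOn_bot_iff] at hf
  have key : ∀ x : ((Fin d → ℤ) → A), x ∈ X →
      ∃ I : Finset (Fin d → ℤ), ∀ y ∈ X, (∀ j ∈ I, y j = x j) → f y = f x := by
    intro x hx
    rcases hf x hx with ⟨U, hU, hxU, hconst⟩
    rcases isOpen_pi_iff.1 hU x hxU with ⟨I, u, hu, hsub⟩
    refine ⟨I, fun y hy hagree => hconst y ⟨hsub fun j hj => ?_, hy⟩⟩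
    rw [hagree j hj]; exact (hu j hj).2
  choose! I hI using key
  have hcover : X ⊆ ⋃ x ∈ X, {y | ∀ j ∈ I x, y j = x j} := by
    intro x hx
    exact Set.mem_biUnion hx fun j _ => rfl
  have := hcomp.elim_finite_subcover_image (fun x hx => cyl_open (I x) x) hcover
  rcases this with ⟨T, hTX, hTfin, hTcover⟩
  haveI := hTfin.fintype
  refine ⟨hTfin.toFinset.biUnion I, fun x hx y hy hagree => ?_⟩
  rcases Set.mem_iUnion₂.1 (hTcover hx) with ⟨z, hzT, hxz⟩
  have hzX : z ∈ X := hTX hzT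
  have h1 : f x = f z := hI z hzX x hx hxz
  have h2 : f y = f z := by
    refine hI z hzX y hy fun j hj => ?_
    rw [← hagree j (Finset.mem_biUnion.2 ⟨z, hTfin.mem_toFinset.2 hzT, hj⟩)]
    exact hxz j hj
  rw [h1, h2]

end Cyl

/-! ### shift and snoc lemmas -/

theorem shiftc_zero {A : Type} {d : ℕ} (x : (Fin d → ℤ) → A) : shiftc 0 x = x := by
  funext j; simp [shiftc]

theorem shiftc_shiftc {A : Type} {d : ℕ} (m n : Fin d → ℤ) (x : (Fin d → ℤ) → A) :
    shiftc m (shiftc n x) = shiftc (n + m) x := by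
  funext j; simp [shiftc, add_assoc]

theorem shiftc_continuous {A : Type} {d : ℕ} (n : Fin d → ℤ) :
    @Continuous _ _ (cfgTop A d) (cfgTop A d) (shiftc n) := by
  letI : TopologicalSpace A := ⊥
  rw [show cfgTop A d = @Pi.topologicalSpace (Fin d → ℤ) (fun _ => A) (fun _ => ⊥) from rfl]
  exact continuous_pi fun j => continuous_apply (n + j)

def embH {e : ℕ} (m : Fin e → ℤ) : Fin (e+1) → ℤ := Fin.snoc m 0

def vertK {e : ℕ} (k : ℤ) : Fin (e+1) → ℤ := Fin.snoc 0 k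

theorem snoc_add {e : ℕ} (m m' : Fin e → ℤ) (a a' : ℤ) :
    (Fin.snoc m a : Fin (e+1) → ℤ) + Fin.snoc m' a' = Fin.snoc (m + m') (a + a') := by
  funext j
  refine Fin.lastCases ?_ (fun i => ?_) j <;> simp

theorem embH_add {e : ℕ} (m m' : Fin e → ℤ) : embH (m + m') = embH m + embH m' := by
  rw [embH, embH, embH, snoc_add, add_zero]

theorem vertK_add {e : ℕ} (a b : ℤ) : vertK (a + b) = (vertK a + vertK b : Fin (e+1) → ℤ) := by
  rw [vertK, vertK, vertK, snoc_add, add_zero]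

theorem embH_zero {e : ℕ} : (embH (0 : Fin e → ℤ)) = 0 := by
  funext j
  refine Fin.lastCases ?_ (fun i => ?_) j <;> simp [embH]

theorem vertK_zero {e : ℕ} : (vertK 0 : Fin (e+1) → ℤ) = 0 := by
  funext j
  refine Fin.lastCases ?_ (fun i => ?_) j <;> simp [vertK]

theorem embH_single {e : ℕ} (i : Fin e) :
    embH (Pi.single i 1) = Pi.single i.castSucc (1 : ℤ) := by
  funext j
  refine Fin.lastCases ?_ (fun i' => ?_) j
  · simp [embH, Pi.single_apply, (Fin.castSucc_lt_last i).ne]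
  · simp [embH, Pi.single_apply, Fin.castSucc_inj]

theorem snoc_decomp {e : ℕ} (nn : Fin (e+1) → ℤ) :
    embH (Fin.init nn) + vertK (nn (Fin.last e)) = nn := by
  rw [embH, vertK, snoc_add]
  simp [Fin.snoc_init_self]

/-! ### the strip projection -/

def rhoX {A : Type} (e n : ℕ) (x : (Fin (e+1) → ℤ) → A) : (Fin e → ℤ) → (Fin n → A) :=
  fun v k => x (Fin.snoc v ((k : ℕ) : ℤ))

theorem rho_shift {A : Type} (e n : ℕ) (m : Fin e → ℤ) (x : (Fin (e+1) → ℤ) → A) :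
    rhoX e n (shiftc (embH m) x) = shiftc m (rhoX e n x) := by
  funext v k
  show x (embH m + Fin.snoc v ((k : ℕ) : ℤ)) = x (Fin.snoc (m + v) ((k : ℕ) : ℤ))
  rw [embH, snoc_add, zero_add]

theorem rho_mem_strip {A : Type} {e n : ℕ} {X : Set ((Fin (e+1) → ℤ) → A)}
    {x : (Fin (e+1) → ℤ) → A} (hx : x ∈ X) : rhoX e n x ∈ stripSetX e n X :=
  ⟨x, hx, fun _ _ => rfl⟩

theorem rho_continuous {A : Type} (e n : ℕ) :
    @Continuous _ _ (cfgTop A (e+1)) (cfgTop (Fin n → A) e) (rhoX e n) := by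
  letI : TopologicalSpace A := ⊥
  haveI : DiscreteTopology A := ⟨rfl⟩
  letI : TopologicalSpace (Fin n → A) := ⊥
  haveI : DiscreteTopology (Fin n → A) := ⟨rfl⟩
  rw [show cfgTop A (e+1) = @Pi.topologicalSpace (Fin (e+1) → ℤ) (fun _ => A) (fun _ => ⊥)
      from rfl,
    show cfgTop (Fin n → A) e
      = @Pi.topologicalSpace (Fin e → ℤ) (fun _ => Fin n → A) (fun _ => ⊥) from rfl]
  refine continuous_pi fun v => continuous_discrete_rng.2 fun b => ?_
  have : (fun x : (Fin (e+1) → ℤ) → A => rhoX e n x v) ⁻¹' {b}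
      = ⋂ k : Fin n, (fun x : (Fin (e+1) → ℤ) → A => x (Fin.snoc v ((k : ℕ) : ℤ))) ⁻¹' {b k} := by
    ext x
    simp [funext_iff, rhoX]
  rw [this]
  exact isOpen_iInter_of_finite fun k => (continuous_apply _).isOpen_preimage _ trivial

theorem mem_of_single_mem {e : ℕ} (S : AddSubgroup (Fin e → ℤ))
    (hgen : ∀ i, Pi.single i 1 ∈ S) (m : Fin e → ℤ) : m ∈ S := by
  classical
  have : m = ∑ i : Fin e, m i • Pi.single i (1 : ℤ) := by
    funext j
    rw [Finset.sum_apply]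
    simp [Pi.single_apply]
  rw [this]
  exact sum_mem fun i _ => AddSubgroup.zsmul_mem S (hgen i) (m i)

/-! ### main theorem -/


/-- Let `X` be a topologically mixing `d`-dimensional subshift,
`d = e + 1 > 1`. If the projective `n`-strip of `X` is cohomologically trivial for every
`n ≥ 1`, then `X` is cohomologically trivial. -/
theorem cohomologically_trivial_of_strips {A : Type} [Fintype A] (e : ℕ) (he : 1 ≤ e)
    (X : Set ((Fin (e + 1) → ℤ) → A)) (hclosed : @IsClosed _ (cfgTop A (e + 1)) X)
    (hinv : ∀ (n : Fin (e + 1) → ℤ) (x : (Fin (e + 1) → ℤ) → A), x ∈ X → shiftc n x ∈ X)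
    (hmix : SubshiftMixing A (e + 1) X)
    (htriv : ∀ n : ℕ, 1 ≤ n → CohomologicallyTrivial (Fin n → A) e (stripSetX e n X)) :
    CohomologicallyTrivial A (e + 1) X := by
  classical
  intro Γ _ c hcc
  obtain ⟨hc, hcont⟩ := hcc
  letI : TopologicalSpace ((Fin (e+1) → ℤ) → A) := cfgTop A (e+1)
  rcases Set.eq_empty_or_nonempty X with hXe | ⟨x₀, hx₀⟩
  · refine ⟨fun _ => 1, contOn_bot_const 1, fun _ => 1, by simp, fun nn x hx => ?_⟩
    rw [hXe] at hx
    exact absurd hx (Set.notMem_empty x)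
  -- cocycle basics
  have hc0 : ∀ x ∈ X, c 0 x = 1 := by
    intro x hx
    have h := hc 0 0 x hx
    rw [add_zero, shiftc_zero] at h
    exact (left_eq_mul.1 h)
  -- windows for the generators
  choose F hF using fun i : Fin (e+1) =>
    exists_window X hclosed (c (Pi.single i 1)) (hcont (Pi.single i 1))
  classical
  set F0 : Finset (Fin (e+1) → ℤ) := Finset.univ.biUnion F with hF0def
  obtain ⟨M, hM⟩ : ∃ M : ℕ, ∀ j ∈ F0, (j (Fin.last e)).natAbs ≤ M :=
    ⟨F0.sup fun j => (j (Fin.last e)).natAbs, fun j hj =>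
      Finset.le_sup (f := fun j => (j (Fin.last e)).natAbs) hj⟩
  obtain ⟨n, hn, hn2⟩ : ∃ n : ℕ, 1 ≤ n ∧ (n : ℤ) = 2 * (M : ℤ) + 1 :=
    ⟨2 * M + 1, by omega, by push_cast; ring⟩
  letI : TopologicalSpace ((Fin e → ℤ) → (Fin n → A)) := cfgTop (Fin n → A) e
  set vM : Fin (e+1) → ℤ := vertK (M : ℤ) with hvMdef
  set c' : (Fin (e+1) → ℤ) → ((Fin (e+1) → ℤ) → A) → Γ := fun nn x => c nn (shiftc vM x)
    with hc'def
  have hc'c : IsCocycleOn Γ X c' := by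
    intro m nn x hx
    show c (m+nn) (shiftc vM x) = c m (shiftc vM (shiftc nn x)) * c nn (shiftc vM x)
    have h := hc m nn (shiftc vM x) (hinv vM x hx)
    rw [shiftc_shiftc, add_comm vM nn, ← shiftc_shiftc] at h
    exact h
  have hc'cont : ∀ nn, @ContinuousOn _ _ (cfgTop A (e+1)) ⊥ (c' nn) X :=
    fun nn => contOn_bot_comp (shiftc_continuous vM) (fun x hx => hinv vM x hx) (hcont nn)
  have hc'0 : ∀ x ∈ X, c' 0 x = 1 := fun x hx => hc0 _ (hinv vM x hx)
  -- agreement through the strip projection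
  have key_agree : ∀ x y : (Fin (e+1) → ℤ) → A, rhoX e n x = rhoX e n y →
      ∀ (w : Fin e → ℤ) (k : ℤ), 0 ≤ k → k < (n : ℤ) → x (Fin.snoc w k) = y (Fin.snoc w k) := by
    intro x y h w k h0 h1
    have hk : k.toNat < n := by omega
    have h2 : rhoX e n x w ⟨k.toNat, hk⟩ = rhoX e n y w ⟨k.toNat, hk⟩ :=
      congrFun (congrFun h w) _
    simpa [rhoX, Int.toNat_of_nonneg h0] using h2
  have hSAgShift : ∀ (m : Fin e → ℤ) (x y : (Fin (e+1) → ℤ) → A), rhoX e n x = rhoX e n y →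
      rhoX e n (shiftc (embH m) x) = rhoX e n (shiftc (embH m) y) := by
    intro m x y h
    rw [rho_shift, rho_shift, h]
  have hsplitvM : ∀ j : Fin (e+1) → ℤ, vM + j = Fin.snoc (Fin.init j) ((M : ℤ) + j (Fin.last e)) := by
    intro j
    conv_lhs => rw [← Fin.snoc_init_self j]
    rw [hvMdef, vertK, snoc_add, zero_add]
  have hwin1 : ∀ i : Fin (e+1), ∀ x ∈ X, ∀ y ∈ X, rhoX e n x = rhoX e n y →
      c' (Pi.single i 1) x = c' (Pi.single i 1) y := by
    intro i x hx y hy hr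
    show c _ (shiftc vM x) = c _ (shiftc vM y)
    refine hF i (shiftc vM x) (hinv vM x hx) (shiftc vM y) (hinv vM y hy) fun j hj => ?_
    have hjF0 : j ∈ F0 := Finset.mem_biUnion.2 ⟨i, Finset.mem_univ i, hj⟩
    have hjM : (j (Fin.last e)).natAbs ≤ M := hM j hjF0
    show x (vM + j) = y (vM + j)
    rw [hsplitvM j]
    exact key_agree x y hr _ _ (by omega) (by omega)
  -- extend to all horizontal shifts
  have hall : ∀ (m : Fin e → ℤ), ∀ x ∈ X, ∀ y ∈ X, rhoX e n x = rhoX e n y →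
      c' (embH m) x = c' (embH m) y := by
    intro m
    refine mem_of_single_mem
      { carrier := {m | ∀ x ∈ X, ∀ y ∈ X, rhoX e n x = rhoX e n y →
          c' (embH m) x = c' (embH m) y}
        zero_mem' := by
          intro x hx y hy _
          rw [embH_zero, hc'0 x hx, hc'0 y hy]
        add_mem' := by
          intro a b ha hb x hx y hy hr
          rw [embH_add, hc'c _ _ x hx, hc'c _ _ y hy]
          rw [ha _ (hinv _ x hx) _ (hinv _ y hy) (hSAgShift b x y hr), hb x hx y hy hr]
        neg_mem' := by
          intro a ha x hx y hy hr
          have hx' := hc'c (embH a) (embH (-a)) x hx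
          have hy' := hc'c (embH a) (embH (-a)) y hy
          rw [← embH_add, add_neg_cancel, embH_zero, hc'0 x hx] at hx'
          rw [← embH_add, add_neg_cancel, embH_zero, hc'0 y hy] at hy'
          have hA : c' (embH a) (shiftc (embH (-a)) x) = c' (embH a) (shiftc (embH (-a)) y) :=
            ha _ (hinv _ x hx) _ (hinv _ y hy) (hSAgShift (-a) x y hr)
          have ex : c' (embH (-a)) x = (c' (embH a) (shiftc (embH (-a)) x))⁻¹ :=
            (inv_eq_of_mul_eq_one_right hx'.symm).symm
          have ey : c' (embH (-a)) y = (c' (embH a) (shiftc (embH (-a)) y))⁻¹ :=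
            (inv_eq_of_mul_eq_one_right hy'.symm).symm
          rw [ex, ey, hA] } (fun i => by
      intro x hx y hy hr
      rw [embH_single]
      exact hwin1 _ x hx y hy hr) m
  -- the section of the strip projection
  set Y := stripSetX e n X with hYdef
  have hexpick : ∀ u : (Fin e → ℤ) → (Fin n → A), ∃ x, u ∈ Y → (x ∈ X ∧ rhoX e n x = u) := by
    intro u
    by_cases h : u ∈ Y
    · obtain ⟨x, hx, hux⟩ := h
      exact ⟨x, fun _ => ⟨hx, funext fun v => funext fun k => (hux v k).symm⟩⟩
    · exact ⟨x₀, fun h' => absurd h' h⟩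
  choose pick hpick using hexpick
  have hpickX : ∀ u ∈ Y, pick u ∈ X := fun u hu => (hpick u hu).1
  have hpickr : ∀ u ∈ Y, rhoX e n (pick u) = u := fun u hu => (hpick u hu).2
  have hwd : ∀ (m : Fin e → ℤ) x, x ∈ X → c' (embH m) (pick (rhoX e n x)) = c' (embH m) x := by
    intro m x hx
    have hmem : rhoX e n x ∈ Y := rho_mem_strip hx
    exact hall m _ (hpickX _ hmem) x hx (hpickr _ hmem)
  have hYshift : ∀ (m : Fin e → ℤ), Set.MapsTo (shiftc m) Y Y := by
    intro m u hu
    rw [← hpickr u hu, ← rho_shift]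
    exact rho_mem_strip (hinv _ _ (hpickX u hu))
  have hshiftr : ∀ (m : Fin e → ℤ) u, u ∈ Y → shiftc m u = rhoX e n (shiftc (embH m) (pick u)) := by
    intro m u hu
    rw [rho_shift, hpickr u hu]
  have hbar_shift : ∀ (m m' : Fin e → ℤ) u, u ∈ Y →
      c' (embH m) (pick (shiftc m' u)) = c' (embH m) (shiftc (embH m') (pick u)) := by
    intro m m' u hu
    rw [hshiftr m' u hu]
    exact hwd m _ (hinv _ _ (hpickX u hu))
  have hbarcoc : IsCocycleOn Γ Y (fun m u => c' (embH m) (pick u)) := by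
    intro m m' u hu
    show c' (embH (m + m')) (pick u) = c' (embH m) (pick (shiftc m' u)) * c' (embH m') (pick u)
    rw [hbar_shift m m' u hu, embH_add]
    exact hc'c _ _ _ (hpickX u hu)
  have hbar0 : ∀ u ∈ Y, c' (embH 0) (pick u) = 1 := by
    intro u hu; rw [embH_zero]; exact hc'0 _ (hpickX u hu)
  have hpick_coord : ∀ u ∈ Y, ∀ (w : Fin e → ℤ) (k : ℤ) (h0 : 0 ≤ k) (h1 : k < (n:ℤ)),
      pick u (Fin.snoc w k) = u w ⟨k.toNat, by omega⟩ := by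
    intro u hu w k h0 h1
    have h2 := congrFun (congrFun (hpickr u hu) w) ⟨k.toNat, by omega⟩
    simpa [rhoX, Int.toNat_of_nonneg h0] using h2
  -- continuity of the strip cocycle
  have hcolwin : ∀ (i : Fin (e+1)) u y, u ∈ Y → y ∈ Y →
      (∀ g ∈ F0.image Fin.init, y g = u g) →
      c' (Pi.single i 1) (pick y) = c' (Pi.single i 1) (pick u) := by
    intro i u y hu hy hagree
    show c _ (shiftc vM (pick y)) = c _ (shiftc vM (pick u))
    refine hF i _ (hinv vM _ (hpickX _ hy)) _ (hinv vM _ (hpickX _ hu)) fun j hj => ?_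
    have hjF0 : j ∈ F0 := Finset.mem_biUnion.2 ⟨i, Finset.mem_univ i, hj⟩
    have hjM : (j (Fin.last e)).natAbs ≤ M := hM j hjF0
    have h0 : (0:ℤ) ≤ (M : ℤ) + j (Fin.last e) := by omega
    have h1 : (M : ℤ) + j (Fin.last e) < (n:ℤ) := by omega
    show pick y (vM + j) = pick u (vM + j)
    rw [hsplitvM j, hpick_coord y hy _ _ h0 h1, hpick_coord u hu _ _ h0 h1]
    rw [hagree (Fin.init j) (Finset.mem_image.2 ⟨j, hjF0, rfl⟩)]
  have hbarcont : ∀ m : Fin e → ℤ,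
      @ContinuousOn _ _ (cfgTop (Fin n → A) e) ⊥ (fun u => c' (embH m) (pick u)) Y := by
    intro m
    refine mem_of_single_mem
      { carrier := {m | @ContinuousOn _ _ (cfgTop (Fin n → A) e) ⊥
          (fun u => c' (embH m) (pick u)) Y}
        zero_mem' := contOn_bot_congr (contOn_bot_const 1) hbar0
        add_mem' := by
          intro a b ha hb
          refine contOn_bot_congr (contOn_bot_mul
            (contOn_bot_comp (shiftc_continuous b) (hYshift b) ha) hb) ?_
          intro u hu
          exact hbarcoc a b u hu
        neg_mem' := by
          intro a ha
          refine contOn_bot_congr (contOn_bot_inv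
            (contOn_bot_comp (shiftc_continuous (-a)) (hYshift (-a)) ha)) ?_
          intro u hu
          have h := hbarcoc a (-a) u hu
          simp only [] at h
          rw [add_neg_cancel, hbar0 u hu] at h
          exact (inv_eq_of_mul_eq_one_right h.symm).symm } (fun i => ?_) m
    -- generators: finite window gives continuity
    show @ContinuousOn _ _ (cfgTop (Fin n → A) e) ⊥
      (fun u => c' (embH (Pi.single i 1)) (pick u)) Y
    rw [contOn_bot_iff]
    intro u hu
    refine ⟨{w | ∀ g ∈ F0.image Fin.init, w g = u g}, cyl_open _ u, fun g _ => rfl, ?_⟩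
    intro y hy
    show c' (embH (Pi.single i 1)) (pick y) = c' (embH (Pi.single i 1)) (pick u)
    rw [embH_single]
    exact hcolwin i.castSucc u y hu hy.2 hy.1
  -- apply triviality on the strip
  obtain ⟨B, hBcont, H, hHhom, hBH⟩ := htriv n hn Γ (fun m u => c' (embH m) (pick u))
    ⟨hbarcoc, hbarcont⟩
  have hb1cont : @ContinuousOn _ _ (cfgTop A (e+1)) ⊥ (fun x => B (rhoX e n x)) X :=
    contOn_bot_comp (rho_continuous e n) (fun x hx => rho_mem_strip hx) hBcont
  have hkey : ∀ (m : Fin e → ℤ) x, x ∈ X →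
      c' (embH m) x = (B (rhoX e n (shiftc (embH m) x)))⁻¹ * H m * B (rhoX e n x) := by
    intro m x hx
    have h := hBH m (rhoX e n x) (rho_mem_strip hx)
    simp only [] at h
    rw [hwd m x hx, ← rho_shift] at h
    exact h
  -- the modified cocycle
  set c₂ : (Fin (e+1) → ℤ) → ((Fin (e+1) → ℤ) → A) → Γ :=
    fun nn x => B (rhoX e n (shiftc nn x)) * c' nn x * (B (rhoX e n x))⁻¹ with hc2def
  have hc₂coc : IsCocycleOn Γ X c₂ := by
    intro m nn x hx
    show B (rhoX e n (shiftc (m+nn) x)) * c' (m+nn) x * (B (rhoX e n x))⁻¹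
      = (B (rhoX e n (shiftc m (shiftc nn x))) * c' m (shiftc nn x)
          * (B (rhoX e n (shiftc nn x)))⁻¹)
        * (B (rhoX e n (shiftc nn x)) * c' nn x * (B (rhoX e n x))⁻¹)
    rw [hc'c m nn x hx, shiftc_shiftc, add_comm nn m]
    group
  have hc₂cont : ∀ nn, @ContinuousOn _ _ (cfgTop A (e+1)) ⊥ (c₂ nn) X := by
    intro nn
    have h1 : @ContinuousOn _ _ (cfgTop A (e+1)) ⊥ (fun x => B (rhoX e n (shiftc nn x))) X :=
      contOn_bot_comp (φ := shiftc nn) (f := fun x => B (rhoX e n x))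
        (shiftc_continuous nn) (fun x hx => hinv nn x hx) hb1cont
    exact contOn_bot_mul (contOn_bot_mul h1 (hc'cont nn)) (contOn_bot_inv hb1cont)
  have hc₂0 : ∀ x ∈ X, c₂ 0 x = 1 := by
    intro x hx
    have h := hc₂coc 0 0 x hx
    rw [add_zero, shiftc_zero] at h
    exact left_eq_mul.1 h
  have hc₂emb : ∀ (m : Fin e → ℤ) x, x ∈ X → c₂ (embH m) x = H m := by
    intro m x hx
    show B (rhoX e n (shiftc (embH m) x)) * c' (embH m) x * (B (rhoX e n x))⁻¹ = H m
    rw [hkey m x hx]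
    group
  clear_value c₂
  -- the vertical generator conjugation relation
  have hgrel : ∀ (m : Fin e → ℤ) x, x ∈ X →
      c₂ (vertK 1) (shiftc (embH m) x) = H m * c₂ (vertK 1) x * (H m)⁻¹ := by
    intro m x hx
    have h1 := hc₂coc (vertK 1) (embH m) x hx
    have h2 := hc₂coc (embH m) (vertK 1) x hx
    rw [add_comm] at h1
    rw [hc₂emb m x hx] at h1
    rw [hc₂emb m _ (hinv _ x hx)] at h2
    have h3 : c₂ (vertK 1) (shiftc (embH m) x) * H m = H m * c₂ (vertK 1) x :=
      h1.symm.trans h2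
    rw [eq_mul_inv_iff_mul_eq]
    exact h3
  -- mixing: the vertical generator value is a central-ish constant
  obtain ⟨Fg, hFg⟩ := exists_window X hclosed (c₂ (vertK 1)) (hc₂cont (vertK 1))
  have hi0 : 0 < e := he
  set i0 : Fin e := ⟨0, hi0⟩ with hi0def
  have stage1 : ∀ x ∈ X, ∀ y ∈ X, ∃ N : ℕ, ∀ m : Fin e → ℤ, (N:ℤ) ≤ |m i0| →
      c₂ (vertK 1) y = H m * c₂ (vertK 1) x * (H m)⁻¹ := by
    intro x hx y hy
    obtain ⟨N, hN⟩ := hmix {z | ∀ j ∈ Fg, z j = x j} {z | ∀ j ∈ Fg, z j = y j}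
      (cyl_open Fg x) (cyl_open Fg y) ⟨x, fun j _ => rfl, hx⟩ ⟨y, fun j _ => rfl, hy⟩
    refine ⟨N, fun m hm => ?_⟩
    obtain ⟨z, ⟨hzU, hzX⟩, hzW, hzX'⟩ := hN (embH m) ⟨i0.castSucc, by
      show (N:ℤ) ≤ |embH m i0.castSucc|
      rw [show embH m i0.castSucc = m i0 by simp [embH]]
      exact hm⟩
    have e1 : c₂ (vertK 1) z = c₂ (vertK 1) x := hFg z hzX x hx fun j hj => hzU j hj
    have e2 : c₂ (vertK 1) (shiftc (embH m) z) = c₂ (vertK 1) y :=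
      hFg _ hzX' y hy fun j hj => hzW j hj
    rw [← e2, hgrel m z hzX, e1]
  have stage2 : ∀ x ∈ X, ∀ m₀ : Fin e → ℤ, H m₀ * c₂ (vertK 1) x = c₂ (vertK 1) x * H m₀ := by
    intro x hx m₀
    obtain ⟨N, hN⟩ := stage1 x hx x hx
    have hN0 : (0:ℤ) ≤ (N:ℤ) := Int.natCast_nonneg N
    have ha := abs_nonneg (m₀ i0)
    have hb := neg_abs_le (m₀ i0)
    set m₁ : Fin e → ℤ := fun i => (N:ℤ) + |m₀ i| with hm₁def
    have hv1 : m₁ i0 = (N:ℤ) + |m₀ i0| := rfl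
    have hv2 : (m₁ + m₀) i0 = (N:ℤ) + |m₀ i0| + m₀ i0 := rfl
    have h1 : (N:ℤ) ≤ |m₁ i0| := by
      rw [hv1, abs_of_nonneg (by omega)]; omega
    have h2 : (N:ℤ) ≤ |(m₁ + m₀) i0| := by
      rw [hv2, abs_of_nonneg (by omega)]; omega
    have E1 := hN m₁ h1
    have E2 := hN (m₁ + m₀) h2
    rw [hHhom] at E2
    have E1' : c₂ (vertK 1) x * H m₁ = H m₁ * c₂ (vertK 1) x := by
      conv_lhs => rw [E1]
      group
    have E2' : c₂ (vertK 1) x * (H m₁ * H m₀) = (H m₁ * H m₀) * c₂ (vertK 1) x := by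
      conv_lhs => rw [E2]
      group
    have key : H m₁ * (c₂ (vertK 1) x * H m₀) = H m₁ * (H m₀ * c₂ (vertK 1) x) := by
      calc H m₁ * (c₂ (vertK 1) x * H m₀) = (H m₁ * c₂ (vertK 1) x) * H m₀ := by
            rw [mul_assoc]
        _ = (c₂ (vertK 1) x * H m₁) * H m₀ := by rw [E1']
        _ = c₂ (vertK 1) x * (H m₁ * H m₀) := by rw [mul_assoc]
        _ = (H m₁ * H m₀) * c₂ (vertK 1) x := E2'
        _ = H m₁ * (H m₀ * c₂ (vertK 1) x) := by rw [mul_assoc]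
    exact (mul_left_cancel key).symm
  have stage3 : ∀ x ∈ X, ∀ y ∈ X, c₂ (vertK 1) y = c₂ (vertK 1) x := by
    intro x hx y hy
    obtain ⟨N, hN⟩ := stage1 x hx y hy
    have h1 : (N:ℤ) ≤ |(fun _ : Fin e => (N:ℤ)) i0| := by
      simp
    have h := hN (fun _ : Fin e => (N:ℤ)) h1
    rw [h, stage2 x hx]
    group
  set γ : Γ := c₂ (vertK 1) x₀ with hγdef
  have hγx : ∀ x ∈ X, c₂ (vertK 1) x = γ := fun x hx => stage3 x₀ hx₀ x hx
  have hγcomm : ∀ m : Fin e → ℤ, H m * γ = γ * H m := fun m => stage2 x₀ hx₀ m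
  clear_value γ
  -- vertical powers
  have hverneg : ∀ x ∈ X, c₂ (vertK (-1)) x = γ⁻¹ := by
    intro x hx
    have h := hc₂coc (vertK 1) (vertK (-1)) x hx
    rw [← vertK_add, show (1:ℤ) + (-1) = 0 by ring, vertK_zero, hc₂0 x hx,
      hγx _ (hinv _ x hx)] at h
    exact (inv_eq_of_mul_eq_one_right h.symm).symm
  have hver : ∀ (k : ℤ) x, x ∈ X → c₂ (vertK k) x = γ ^ k := by
    intro k
    induction k using Int.induction_on with
    | zero => intro x hx; rw [vertK_zero, hc₂0 x hx, zpow_zero]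
    | succ k ih =>
      intro x hx
      have h := hc₂coc (vertK k) (vertK 1) x hx
      rw [← vertK_add, ih _ (hinv _ x hx), hγx x hx] at h
      rw [h]
      exact (zpow_add_one γ k).symm
    | pred k ih =>
      intro x hx
      have h := hc₂coc (vertK (-k)) (vertK (-1)) x hx
      rw [← vertK_add, show (-(k:ℤ)) + (-1) = -(k:ℤ) - 1 by ring, ih _ (hinv _ x hx),
        hverneg x hx] at h
      rw [h]
      exact (zpow_sub_one γ (-(k:ℤ))).symm
  -- full description of c₂
  have hfinal₂ : ∀ (nn : Fin (e+1) → ℤ) x, x ∈ X →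
      c₂ nn x = H (Fin.init nn) * γ ^ (nn (Fin.last e)) := by
    intro nn x hx
    have h := hc₂coc (embH (Fin.init nn)) (vertK (nn (Fin.last e))) x hx
    rw [snoc_decomp] at h
    rw [h, hc₂emb _ _ (hinv _ x hx), hver _ x hx]
  -- the homomorphism
  have hhom : ∀ a b : Fin (e+1) → ℤ,
      H (Fin.init (a+b)) * γ ^ ((a+b) (Fin.last e))
      = (H (Fin.init a) * γ ^ (a (Fin.last e))) * (H (Fin.init b) * γ ^ (b (Fin.last e))) := by
    intro a b
    have hinit : Fin.init (a+b) = Fin.init a + Fin.init b := rfl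
    have hlast : (a+b) (Fin.last e) = a (Fin.last e) + b (Fin.last e) := rfl
    rw [hinit, hlast, hHhom, zpow_add]
    have hcom : γ ^ (a (Fin.last e)) * H (Fin.init b) = H (Fin.init b) * γ ^ (a (Fin.last e)) := by
      have hco : Commute (H (Fin.init b)) γ := hγcomm _
      exact ((hco.zpow_right _).eq).symm
    calc H (Fin.init a) * H (Fin.init b) * (γ ^ a (Fin.last e) * γ ^ b (Fin.last e))
        = H (Fin.init a) * (H (Fin.init b) * γ ^ a (Fin.last e)) * γ ^ b (Fin.last e) := by
          group
      _ = H (Fin.init a) * (γ ^ a (Fin.last e) * H (Fin.init b)) * γ ^ b (Fin.last e) := by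
          rw [← hcom]
      _ = _ := by group
  -- unwind to the original cocycle
  refine ⟨fun x => B (rhoX e n x) * c vM x,
    contOn_bot_mul hb1cont (hcont vM),
    fun nn => H (Fin.init nn) * γ ^ (nn (Fin.last e)), hhom, ?_⟩
  intro nn x hx
  have h2 := hfinal₂ nn x hx
  have hswap : c nn (shiftc vM x) * c vM x = c vM (shiftc nn x) * c nn x := by
    have hA := hc nn vM x hx
    have hB := hc vM nn x hx
    rw [add_comm nn vM] at hA
    exact hA.symm.trans hB
  show c nn x = (B (rhoX e n (shiftc nn x)) * c vM (shiftc nn x))⁻¹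
    * (H (Fin.init nn) * γ ^ (nn (Fin.last e))) * (B (rhoX e n x) * c vM x)
  rw [← h2, hc2def]
  show c nn x = (B (rhoX e n (shiftc nn x)) * c vM (shiftc nn x))⁻¹
    * (B (rhoX e n (shiftc nn x)) * c nn (shiftc vM x) * (B (rhoX e n x))⁻¹)
    * (B (rhoX e n x) * c vM x)
  have expand : (B (rhoX e n (shiftc nn x)) * c vM (shiftc nn x))⁻¹
      * (B (rhoX e n (shiftc nn x)) * c nn (shiftc vM x) * (B (rhoX e n x))⁻¹)
      * (B (rhoX e n x) * c vM x)
      = (c vM (shiftc nn x))⁻¹ * (c nn (shiftc vM x) * c vM x) := by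
    group
  rw [expand, hswap, inv_mul_cancel_left]
end

section
/- Let G be a finite undirected graph, a a vertex of G, n ≥ 1, and let c, c', c'', c''' be cycles of length 2n in G all beginning and ending at a. Then for every k ≥ 0 there exists a graph homomorphism from the grid annulus B²(n(2k+1)) ∖ B²(n−1) to G whose restriction to ∂B²(n), read clockwise, has left side c, top side c', right side c'', and bottom side c''', and whose restriction to ∂B²(n(2k+1)), read clockwise, has left side c^{−k} ⊙ c^{k+1}, top side (c')^{k+1} ⊙ (c')^{−k}, right side (c'')^{−k} ⊙ (c'')^{k+1}, and bottom side (c''')^{k+1} ⊙ (c''')^{−k}. -/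
variable {V : Type}

/-- A walk in a graph: a nonempty list of vertices with consecutive vertices adjacent. -/
def IsWalk (G : V → V → Prop) (p : List V) : Prop := p ≠ [] ∧ List.Chain' G p

/-- The length (number of steps) of a walk given as its list of vertices. -/
def walkLen (p : List V) : ℕ := p.length - 1

/-- A cycle: a walk whose first and last vertices coincide. -/
def IsCycle (G : V → V → Prop) (p : List V) : Prop := IsWalk G p ∧ p.head? = p.getLast?

/-- A cycle based at the vertex `a`. -/
def IsCycleAt (G : V → V → Prop) (a : V) (p : List V) : Prop := IsCycle G p ∧ p.head? = some a

/-- A walk is non-backtracking when it contains no backtrack `u v u`. -/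
def IsNonBacktracking (p : List V) : Prop :=
  ∀ (i : ℕ) (h : i + 2 < p.length), p[i]'(by omega) ≠ p[i + 2]'h

/-- One elementary move: insertion of a backtrack or of a square into a walk. -/
inductive SqStep (G : V → V → Prop) : List V → List V → Prop
  | backtrack (l₁ l₂ : List V) (u v : V) (huv : G u v) (hvu : G v u) :
      SqStep G (l₁ ++ u :: l₂) (l₁ ++ u :: v :: u :: l₂)
  | square (l₁ l₂ : List V) (u x y z : V)
      (h1 : G u x) (h2 : G x y) (h3 : G y z) (h4 : G z u)
      (hne1 : u ≠ y) (hne2 : x ≠ z) :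
      SqStep G (l₁ ++ u :: l₂) (l₁ ++ u :: x :: y :: z :: u :: l₂)

/-- Square-equivalence of walks: the equivalence generated by finitely many insertions
and deletions of backtracks and of squares. -/
def SquareEquiv (G : V → V → Prop) : List V → List V → Prop :=
  Relation.ReflTransGen (fun p q => SqStep G p q ∨ SqStep G q p)

/-- A cycle is square-decomposable when it is square-equivalent to the trivial cycle
at its base point. -/
def IsSquareDecomposable (G : V → V → Prop) (p : List V) : Prop :=
  ∃ a : V, p.head? = some a ∧ SquareEquiv G p [a]

def GraphConnected (G : V → V → Prop) : Prop :=
  ∀ u v : V, ∃ p : List V, IsWalk G p ∧ p.head? = some u ∧ p.getLast? = some v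

def GraphBipartite (G : V → V → Prop) : Prop :=
  ∃ f : V → Bool, ∀ u v : V, G u v → f u ≠ f v

/-- Concatenation of walks (the second walk starts where the first one ends). -/
def wconcat (p q : List V) : List V := p ++ q.tail

/-- `k`-fold concatenation of the cycle `c` based at `a`. -/
def wpow (a : V) (c : List V) : ℕ → List V
  | 0 => [a]
  | k + 1 => wconcat (wpow a c k) c

/-- The list of vertices read in the pattern `Q` starting at `s`, in direction `dir`,
for `len` steps. -/
def readSeg (Q : ℤ × ℤ → V) (s : ℤ × ℤ) (dir : ℤ × ℤ) (len : ℕ) : List V :=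
  (List.range (len + 1)).map fun i => Q (s + (i : ℤ) • dir)

section AnnulusAux

/-- Bundled hypotheses for a cycle of combinatorial length `2n` based at `a`. -/
def CycOK (G : V → V → Prop) (a : V) (n : ℕ) (c : List V) : Prop :=
  c.head? = some a ∧ c.getLast? = some a ∧ c.length = 2 * n + 1 ∧ List.Chain' G c

/-- Evaluation of the cycle at any integer index, via reduction mod `2n`. -/
def zcyc (a : V) (n : ℕ) (c : List V) (t : ℤ) : V :=
  c.getD (t % (2 * (n : ℤ))).toNat a

variable {G : V → V → Prop} {a : V} {n : ℕ} {c : List V}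

lemma zcyc_period (t j : ℤ) : zcyc a n c (t + 2 * (n : ℤ) * j) = zcyc a n c t := by
  unfold zcyc; rw [Int.add_mul_emod_self_left]

lemma CycOK.getD_zero (hc : CycOK G a n c) : c.getD 0 a = a := by
  obtain ⟨ys, hy⟩ := List.head?_eq_some_iff.mp hc.1
  simp [hy]

lemma CycOK.lenpos (hc : CycOK G a n c) : 0 < c.length := by
  rw [hc.2.2.1]; omega

lemma CycOK.getD_last (hc : CycOK G a n c) : c.getD (2 * n) a = a := by
  have hlen := hc.2.2.1
  have h1 : (c)[2 * n]? = some a := by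
    rw [show 2 * n = c.length - 1 by omega, ← List.getLast?_eq_getElem?]
    exact hc.2.1
  rw [List.getD_eq_getElem?_getD, h1]
  rfl

lemma zcyc_castnat (hc : CycOK G a n c) (hn : 1 ≤ n) (r : ℕ) (hr : r ≤ 2 * n) :
    zcyc a n c (r : ℤ) = c.getD r a := by
  unfold zcyc
  rcases lt_or_eq_of_le hr with h | h
  · rw [Int.emod_eq_of_lt (by positivity) (by exact_mod_cast h)]
    simp
  · subst h
    rw [show ((2 * n : ℕ) : ℤ) = 2 * (n : ℤ) by push_cast; ring, Int.emod_self]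
    show c.getD (0 : ℤ).toNat a = _
    simp only [Int.toNat_zero]
    rw [hc.getD_zero, hc.getD_last]

lemma zcyc_zero (hc : CycOK G a n c) (hn : 1 ≤ n) : zcyc a n c 0 = a := by
  have h := zcyc_castnat hc hn 0 (by omega)
  rw [hc.getD_zero] at h
  simpa using h

lemma zcyc_two_n (hc : CycOK G a n c) (hn : 1 ≤ n) : zcyc a n c (2 * (n : ℤ)) = a := by
  have := zcyc_castnat hc hn (2 * n) le_rfl
  rw [show ((2 * n : ℕ) : ℤ) = 2 * (n : ℤ) by push_cast; ring] at this
  rw [this, hc.getD_last]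

lemma zcyc_adj_succ (hc : CycOK G a n c) (hn : 1 ≤ n) (t : ℤ) :
    G (zcyc a n c t) (zcyc a n c (t + 1)) := by
  have hm : (0 : ℤ) < 2 * (n : ℤ) := by omega
  set r := t % (2 * (n : ℤ)) with hr
  have hr0 : 0 ≤ r := Int.emod_nonneg t (by omega)
  have hr1 : r < 2 * (n : ℤ) := Int.emod_lt_of_pos t hm
  have hkey : ∀ i : ℕ, i + 1 < c.length → G (c.getD i a) (c.getD (i + 1) a) := by
    intro i hi
    rw [List.getD_eq_getElem _ _ (by omega), List.getD_eq_getElem _ _ hi]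
    have := List.isChain_iff_getElem.mp hc.2.2.2 i (by omega)
    simpa [List.get_eq_getElem] using this
  have h1 : zcyc a n c t = c.getD r.toNat a := by unfold zcyc; rfl
  have hstep : (t + 1) % (2 * (n : ℤ)) = (r + 1) % (2 * (n : ℤ)) := by
    conv_lhs => rw [Int.add_emod]
    rw [← hr, show (1 : ℤ) % (2 * (n : ℤ)) = 1 from Int.emod_eq_of_lt (by omega) (by omega)]
  have h2 : zcyc a n c (t + 1) = c.getD (r.toNat + 1) a := by
    unfold zcyc
    rw [hstep]
    rcases eq_or_lt_of_le (show r + 1 ≤ 2 * (n : ℤ) by omega) with h | h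
    · rw [h, Int.emod_self]
      have h2n : r.toNat + 1 = 2 * n := by omega
      rw [h2n]
      show c.getD (0 : ℤ).toNat a = _
      simp only [Int.toNat_zero]
      rw [hc.getD_zero, hc.getD_last]
    · rw [Int.emod_eq_of_lt (by omega) h]
      congr 1
      omega
  rw [h1, h2]
  exact hkey r.toNat (by rw [hc.2.2.1]; omega)

lemma zcyc_adj (hsym : Symmetric G) (hc : CycOK G a n c) (hn : 1 ≤ n) {s t : ℤ}
    (h : t = s + 1 ∨ s = t + 1) : G (zcyc a n c s) (zcyc a n c t) := by
  rcases h with rfl | rfl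
  · exact zcyc_adj_succ hc hn s
  · exact hsym (zcyc_adj_succ hc hn t)

lemma zcyc_cross (hsym : Symmetric G) {X Y : List V} (hX : CycOK G a n X) (hY : CycOK G a n Y)
    (hn : 1 ≤ n) {e f : ℤ} (he : e = 0 ∨ e = 2 * (n : ℤ))
    (hf : f = 1 ∨ f = 2 * (n : ℤ) + 1 ∨ f = -1 ∨ f = 2 * (n : ℤ) - 1) :
    G (zcyc a n X e) (zcyc a n Y f) := by
  have hXa : zcyc a n X e = a := by
    rcases he with rfl | rfl
    · exact zcyc_zero hX hn
    · exact zcyc_two_n hX hn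
  rw [hXa]
  have h0 : zcyc a n Y 0 = a := zcyc_zero hY hn
  have h1 : G a (zcyc a n Y 1) := by
    have := zcyc_adj_succ hY hn 0
    rw [h0] at this
    simpa using this
  have h2 : G (zcyc a n Y (-1)) a := by
    have := zcyc_adj_succ hY hn (-1)
    rw [show (-1 : ℤ) + 1 = 0 by ring, h0] at this
    exact this
  rcases hf with rfl | rfl | rfl | rfl
  · exact h1
  · rw [show 2 * (n : ℤ) + 1 = 1 + 2 * (n : ℤ) * 1 by ring, zcyc_period]; exact h1
  · exact hsym h2
  · rw [show 2 * (n : ℤ) - 1 = (-1) + 2 * (n : ℤ) * 1 by ring, zcyc_period]; exact hsym h2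

lemma zcyc_cross' (hsym : Symmetric G) {X Y : List V} (hX : CycOK G a n X) (hY : CycOK G a n Y)
    (hn : 1 ≤ n) {e f : ℤ} (he : e = 1 ∨ e = 2 * (n : ℤ) + 1 ∨ e = -1 ∨ e = 2 * (n : ℤ) - 1)
    (hf : f = 0 ∨ f = 2 * (n : ℤ)) :
    G (zcyc a n X e) (zcyc a n Y f) :=
  hsym (zcyc_cross hsym hY hX hn hf he)

lemma CycOK.reverse (hsym : Symmetric G) (hc : CycOK G a n c) : CycOK G a n c.reverse := by
  refine ⟨?_, ?_, ?_, ?_⟩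
  · rw [List.head?_reverse]; exact hc.2.1
  · rw [List.getLast?_reverse]; exact hc.1
  · rw [List.length_reverse]; exact hc.2.2.1
  · exact List.isChain_reverse.mpr (hc.2.2.2.imp fun _ _ h => hsym h)

lemma zcyc_rev (hc : CycOK G a n c) (hn : 1 ≤ n) (t : ℤ) :
    zcyc a n c.reverse t = zcyc a n c (-t) := by
  have hm : (0 : ℤ) < 2 * (n : ℤ) := by omega
  set r := t % (2 * (n : ℤ)) with hr
  have hr0 : 0 ≤ r := Int.emod_nonneg t (by omega)
  have hr1 : r < 2 * (n : ℤ) := Int.emod_lt_of_pos t hm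
  have hneg : (-t) % (2 * (n : ℤ)) = (2 * (n : ℤ) - r) % (2 * (n : ℤ)) := by
    have hdiv := Int.emod_add_mul_ediv t (2 * (n : ℤ))
    conv_lhs => rw [show -t = (2 * (n : ℤ) - r) + 2 * (n : ℤ) * (-(t / (2 * (n : ℤ))) - 1) by
      rw [hr]; linarith [hdiv]]
    rw [Int.add_mul_emod_self_left]
  rcases eq_or_lt_of_le hr0 with h0 | h0
  · have hz : (-t) % (2 * (n : ℤ)) = 0 := by
      rw [hneg, ← h0, sub_zero, Int.emod_self]
    have hlz : zcyc a n c.reverse t = c.reverse.getD 0 a := by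
      unfold zcyc; rw [← hr, ← h0]; rfl
    have hrevOK : c.reverse.getD 0 a = a := by
      obtain ⟨ys, hy⟩ := List.head?_eq_some_iff.mp (show c.reverse.head? = some a by
        rw [List.head?_reverse]; exact hc.2.1)
      simp [hy]
    unfold zcyc
    rw [hz, ← hr, ← h0]
    simp only [Int.toNat_zero]
    rw [hrevOK, hc.getD_zero]
  · have h2 : (-t) % (2 * (n : ℤ)) = 2 * (n : ℤ) - r := by
      rw [hneg]; exact Int.emod_eq_of_lt (by omega) (by omega)
    unfold zcyc
    rw [h2, ← hr]
    rw [List.getD_eq_getElem _ _ (by rw [List.length_reverse, hc.2.2.1]; omega),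
        List.getD_eq_getElem _ _ (by rw [hc.2.2.1]; omega)]
    rw [List.getElem_reverse]
    congr 1
    rw [hc.2.2.1]
    omega

lemma wpow_length (hc : CycOK G a n c) (j : ℕ) : (wpow a c j).length = j * (2 * n) + 1 := by
  induction j with
  | zero => simp [wpow]
  | succ j ih =>
    show (wpow a c j ++ c.tail).length = _
    rw [List.length_append, ih, List.length_tail, hc.2.2.1]
    have hsucc : (j + 1) * (2 * n) = j * (2 * n) + 2 * n := by ring
    omega

lemma wpow_ne_nil (hc : CycOK G a n c) (j : ℕ) : wpow a c j ≠ [] := by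
  have := wpow_length hc j
  intro h
  rw [h] at this
  simp at this

lemma wpow_head (hc : CycOK G a n c) (j : ℕ) : (wpow a c j).head? = some a := by
  induction j with
  | zero => rfl
  | succ j ih =>
    show (wpow a c j ++ c.tail).head? = some a
    rw [List.head?_append_of_ne_nil _ (wpow_ne_nil hc j)]
    exact ih

lemma wpow_getD (hc : CycOK G a n c) (hn : 1 ≤ n) :
    ∀ (j : ℕ) (i : ℕ), i ≤ j * (2 * n) → (wpow a c j).getD i a = zcyc a n c (i : ℤ) := by
  intro j
  induction j with
  | zero =>
    intro i hi
    have : i = 0 := by omega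
    subst this
    simp [wpow, zcyc_zero hc hn]
  | succ j ih =>
    intro i hi
    have hlen := wpow_length hc j
    have hsucc : (j + 1) * (2 * n) = j * (2 * n) + 2 * n := by ring
    show (wpow a c j ++ c.tail).getD i a = _
    by_cases hil : i < (wpow a c j).length
    · rw [List.getD_eq_getElem _ _ (by rw [List.length_append]; omega),
          List.getElem_append_left hil, ← List.getD_eq_getElem _ _ hil]
      exact ih i (by omega)
    · push_neg at hil
      obtain ⟨ys, hys⟩ := List.head?_eq_some_iff.mp hc.1
      have hyslen : ys.length = 2 * n := by
        have := hc.2.2.1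
        rw [hys] at this
        simpa using this
      have htail : c.tail = ys := by rw [hys]; rfl
      have hitot : i < (wpow a c j ++ c.tail).length := by
        rw [List.length_append, htail, hyslen, hlen]
        omega
      rw [List.getD_eq_getElem _ _ hitot, List.getElem_append_right hil]
      rw [← List.getD_eq_getElem (c.tail) a (by
        rw [htail, hyslen, hlen]; omega)]
      rw [htail]
      have hidx : i - (wpow a c j).length = (i - j * (2 * n) - 1) := by
        rw [hlen, Nat.sub_sub]
      rw [hidx]
      have h1 : 1 ≤ i - j * (2 * n) := by rw [hlen] at hil; omega
      have h2n : i - j * (2 * n) ≤ 2 * n := by omega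
      have hthis : ys.getD (i - j * (2 * n) - 1) a = c.getD (i - j * (2 * n)) a := by
        rw [hys]
        conv_rhs => rw [← Nat.sub_add_cancel h1]
        rw [List.getD_cons_succ]
      rw [hthis, ← zcyc_castnat hc hn _ h2n]
      rw [show ((i - j * (2 * n) : ℕ) : ℤ) = (i : ℤ) + 2 * (n : ℤ) * (-(j : ℤ)) by
        push_cast [Nat.cast_sub (by omega : j * (2*n) ≤ i)]; push_cast; ring]
      rw [zcyc_period]

lemma wcat_wpow_length {p q : List V} (hp : CycOK G a n p) (hq : CycOK G a n q) (j1 j2 : ℕ) :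
    (wconcat (wpow a p j1) (wpow a q j2)).length = j1 * (2 * n) + j2 * (2 * n) + 1 := by
  unfold wconcat
  rw [List.length_append, wpow_length hp, List.length_tail, wpow_length hq]
  omega

lemma wcat_wpow_getD_left {p q : List V} (hp : CycOK G a n p) (hq : CycOK G a n q)
    (hn : 1 ≤ n) (j1 j2 i : ℕ) (hi : i ≤ j1 * (2 * n)) :
    (wconcat (wpow a p j1) (wpow a q j2)).getD i a = zcyc a n p (i : ℤ) := by
  unfold wconcat
  have hlen := wpow_length hp j1
  rw [List.getD_eq_getElem _ _ (by rw [List.length_append]; omega),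
      List.getElem_append_left (by omega), ← List.getD_eq_getElem _ _ (by omega)]
  exact wpow_getD hp hn j1 i hi

lemma wcat_wpow_getD_right {p q : List V} (hp : CycOK G a n p) (hq : CycOK G a n q)
    (hn : 1 ≤ n) (j1 j2 i : ℕ) (hi1 : j1 * (2 * n) < i) (hi2 : i ≤ j1 * (2 * n) + j2 * (2 * n)) :
    (wconcat (wpow a p j1) (wpow a q j2)).getD i a = zcyc a n q ((i : ℤ) - (j1 * (2 * n) : ℕ)) := by
  unfold wconcat
  have hlenp := wpow_length hp j1
  have hlenq := wpow_length hq j2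
  have htot : i < (wpow a p j1 ++ (wpow a q j2).tail).length := by
    rw [List.length_append, List.length_tail]; omega
  rw [List.getD_eq_getElem _ _ htot, List.getElem_append_right (by omega),
      ← List.getD_eq_getElem _ a (by rw [List.length_tail]; omega)]
  obtain ⟨ys, hys⟩ := List.head?_eq_some_iff.mp (wpow_head hq j2)
  have htl : (wpow a q j2).tail = ys := by rw [hys]; rfl
  rw [htl]
  have : ys.getD (i - (wpow a p j1).length) a = (wpow a q j2).getD (i - j1 * (2 * n)) a := by
    rw [hys, hlenp, show i - j1 * (2 * n) = (i - (j1 * (2 * n) + 1)) + 1 by omega,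
       List.getD_cons_succ]
  rw [this, wpow_getD hq hn j2 _ (by omega)]
  congr 1
  push_cast [Nat.cast_sub (by omega : j1 * (2*n) ≤ i)]
  ring

end AnnulusAux

section AnnulusConstruction

variable {G : V → V → Prop} {a : V} {n : ℕ}

/-- The annulus-filling pattern. -/
def annQ (a : V) (n : ℕ) (c cB cC cD : List V) (p : ℤ × ℤ) : V :=
  if p.2 ≤ -p.1 ∧ -p.2 ≤ -p.1 then
    if -(n : ℤ) ≤ p.2 then zcyc a n c (p.1 + p.2 + 2 * (n : ℤ)) else zcyc a n c (p.1 - p.2)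
  else if p.1 ≤ p.2 ∧ -p.1 ≤ p.2 then
    if p.1 ≤ (n : ℤ) then zcyc a n cB (p.1 + p.2) else zcyc a n cB (p.2 - p.1 + 2 * (n : ℤ))
  else if p.2 ≤ p.1 ∧ -p.2 ≤ p.1 then
    if p.2 ≤ (n : ℤ) then zcyc a n cC (2 * (n : ℤ) - p.1 - p.2) else zcyc a n cC (p.2 - p.1)
  else
    if -(n : ℤ) ≤ p.1 then zcyc a n cD (-p.1 - p.2) else zcyc a n cD (p.1 - p.2 + 2 * (n : ℤ))

lemma annQ_adj_right (hsym : Symmetric G) (hn : 1 ≤ n) {c cB cC cD : List V}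
    (hc : CycOK G a n c) (hB : CycOK G a n cB) (hC : CycOK G a n cC) (hD : CycOK G a n cD)
    (x y : ℤ) (hu : (n : ℤ) ≤ x ∨ x ≤ -(n : ℤ) ∨ (n : ℤ) ≤ y ∨ y ≤ -(n : ℤ))
    (hv : (n : ℤ) ≤ x + 1 ∨ x + 1 ≤ -(n : ℤ) ∨ (n : ℤ) ≤ y ∨ y ≤ -(n : ℤ)) :
    G (annQ a n c cB cC cD (x, y)) (annQ a n c cB cC cD (x + 1, y)) := by
  simp only [annQ]
  split_ifs <;>
    first
      | (exfalso; omega)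
      | exact zcyc_adj hsym hc hn (by omega)
      | exact zcyc_adj hsym hB hn (by omega)
      | exact zcyc_adj hsym hC hn (by omega)
      | exact zcyc_adj hsym hD hn (by omega)
      | exact zcyc_cross hsym hc hB hn (by omega) (by omega)
      | exact zcyc_cross hsym hc hD hn (by omega) (by omega)
      | exact zcyc_cross hsym hB hC hn (by omega) (by omega)
      | exact zcyc_cross hsym hC hD hn (by omega) (by omega)
      | exact zcyc_cross hsym hB hD hn (by omega) (by omega)
      | exact zcyc_cross hsym hc hC hn (by omega) (by omega)
      | exact zcyc_cross' hsym hC hB hn (by omega) (by omega)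
      | exact zcyc_cross' hsym hD hC hn (by omega) (by omega)
      | exact zcyc_cross' hsym hD hc hn (by omega) (by omega)
      | exact zcyc_cross' hsym hB hc hn (by omega) (by omega)
      | exact zcyc_cross' hsym hD hB hn (by omega) (by omega)
      | exact zcyc_cross' hsym hC hc hn (by omega) (by omega)

lemma annQ_adj_up (hsym : Symmetric G) (hn : 1 ≤ n) {c cB cC cD : List V}
    (hc : CycOK G a n c) (hB : CycOK G a n cB) (hC : CycOK G a n cC) (hD : CycOK G a n cD)
    (x y : ℤ) (hu : (n : ℤ) ≤ x ∨ x ≤ -(n : ℤ) ∨ (n : ℤ) ≤ y ∨ y ≤ -(n : ℤ))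
    (hv : (n : ℤ) ≤ x ∨ x ≤ -(n : ℤ) ∨ (n : ℤ) ≤ y + 1 ∨ y + 1 ≤ -(n : ℤ)) :
    G (annQ a n c cB cC cD (x, y)) (annQ a n c cB cC cD (x, y + 1))  := by
  simp only [annQ]
  split_ifs <;>
    first
      | (exfalso; omega)
      | exact zcyc_adj hsym hc hn (by omega)
      | exact zcyc_adj hsym hB hn (by omega)
      | exact zcyc_adj hsym hC hn (by omega)
      | exact zcyc_adj hsym hD hn (by omega)
      | exact zcyc_cross hsym hc hB hn (by omega) (by omega)
      | exact zcyc_cross hsym hc hD hn (by omega) (by omega)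
      | exact zcyc_cross hsym hB hC hn (by omega) (by omega)
      | exact zcyc_cross hsym hC hD hn (by omega) (by omega)
      | exact zcyc_cross hsym hB hD hn (by omega) (by omega)
      | exact zcyc_cross hsym hc hC hn (by omega) (by omega)
      | exact zcyc_cross' hsym hC hB hn (by omega) (by omega)
      | exact zcyc_cross' hsym hD hC hn (by omega) (by omega)
      | exact zcyc_cross' hsym hD hc hn (by omega) (by omega)
      | exact zcyc_cross' hsym hB hc hn (by omega) (by omega)
      | exact zcyc_cross' hsym hD hB hn (by omega) (by omega)
      | exact zcyc_cross' hsym hC hc hn (by omega) (by omega)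

lemma flatMap_cast_length (l : List ℕ) :
    (l.flatMap fun a => [((a : ℕ) : ℤ)]).length = l.length := by
  induction l with
  | nil => rfl
  | cons x xs ih => simp [ih]

lemma flatMap_cast_getElem (l : List ℕ) (jj : ℕ)
    (hh : jj < (l.flatMap fun a => [((a : ℕ) : ℤ)]).length) :
    (l.flatMap fun a => [((a : ℕ) : ℤ)])[jj]
      = ((l[jj]'(by rw [flatMap_cast_length] at hh; exact hh) : ℕ) : ℤ) := by
  induction l generalizing jj with
  | nil => simp at hh
  | cons x xs ih =>
    cases jj with
    | zero => simp
    | succ m =>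
      have hm : m < (xs.flatMap fun a => [((a : ℕ) : ℤ)]).length := by
        rw [flatMap_cast_length] at hh ⊢; simpa using hh
      have := ih m hm
      simpa using this

lemma readSeg_length (Q : ℤ × ℤ → V) (s d : ℤ × ℤ) (len : ℕ) :
    (readSeg Q s d len).length = len + 1 := by
  simp [readSeg, Function.comp_def]

lemma readSeg_get' (Q : ℤ × ℤ → V) (s1 s2 d1 d2 : ℤ) (len i : ℕ)
    (h : i < (readSeg Q (s1, s2) (d1, d2) len).length) :
    (readSeg Q (s1, s2) (d1, d2) len)[i] = Q (s1 + (i : ℤ) * d1, s2 + (i : ℤ) * d2) := by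
  simp [readSeg, Function.comp_def, flatMap_cast_getElem]

end AnnulusConstruction

set_option maxHeartbeats 4000000 in
/-- Given cycles `c`, `cB`, `cC`, `cD` of length `2n` at `a` and
`k ≥ 0`, there is a graph homomorphism from the annulus `BB(n(2k+1)) minus BB(n-1)` to `G`
whose inner boundary reads (clockwise) the four cycles and whose outer boundary reads
the corresponding products of their powers. -/
theorem annulus_completion {V : Type} [Fintype V] (G : V → V → Prop) (hsym : Symmetric G)
    (a : V) (n : ℕ) (hn : 1 ≤ n) (c cB cC cD : List V)
    (hc : IsCycleAt G a c) (hcB : IsCycleAt G a cB)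
    (hcC : IsCycleAt G a cC) (hcD : IsCycleAt G a cD)
    (hl : walkLen c = 2 * n) (hlB : walkLen cB = 2 * n)
    (hlC : walkLen cC = 2 * n) (hlD : walkLen cD = 2 * n) (k : ℕ) :
    ∃ Q : ℤ × ℤ → V,
      (∀ u v : ℤ × ℤ,
        (n : ℤ) ≤ max |u.1| |u.2| → max |u.1| |u.2| ≤ ((n * (2 * k + 1) : ℕ) : ℤ) →
        (n : ℤ) ≤ max |v.1| |v.2| → max |v.1| |v.2| ≤ ((n * (2 * k + 1) : ℕ) : ℤ) →
        |u.1 - v.1| + |u.2 - v.2| = 1 → G (Q u) (Q v)) ∧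
      readSeg Q (-(n : ℤ), -(n : ℤ)) (0, 1) (2 * n) = c ∧
      readSeg Q (-(n : ℤ), (n : ℤ)) (1, 0) (2 * n) = cB ∧
      readSeg Q ((n : ℤ), (n : ℤ)) (0, -1) (2 * n) = cC ∧
      readSeg Q ((n : ℤ), -(n : ℤ)) (-1, 0) (2 * n) = cD ∧
      readSeg Q (-((n * (2 * k + 1) : ℕ) : ℤ), -((n * (2 * k + 1) : ℕ) : ℤ)) (0, 1)
          (2 * (n * (2 * k + 1))) = wconcat (wpow a c.reverse k) (wpow a c (k + 1)) ∧
      readSeg Q (-((n * (2 * k + 1) : ℕ) : ℤ), ((n * (2 * k + 1) : ℕ) : ℤ)) (1, 0)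
          (2 * (n * (2 * k + 1))) = wconcat (wpow a cB (k + 1)) (wpow a cB.reverse k) ∧
      readSeg Q (((n * (2 * k + 1) : ℕ) : ℤ), ((n * (2 * k + 1) : ℕ) : ℤ)) (0, -1)
          (2 * (n * (2 * k + 1))) = wconcat (wpow a cC.reverse k) (wpow a cC (k + 1)) ∧
      readSeg Q (((n * (2 * k + 1) : ℕ) : ℤ), -((n * (2 * k + 1) : ℕ) : ℤ)) (-1, 0)
          (2 * (n * (2 * k + 1))) = wconcat (wpow a cD (k + 1)) (wpow a cD.reverse k) := by
  have hlen_c : c.length = 2 * n + 1 := by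
    have h0 : 0 < c.length := List.length_pos_iff.mpr hc.1.1.1
    unfold walkLen at hl; omega
  have hlen_B : cB.length = 2 * n + 1 := by
    have h0 : 0 < cB.length := List.length_pos_iff.mpr hcB.1.1.1
    unfold walkLen at hlB; omega
  have hlen_C : cC.length = 2 * n + 1 := by
    have h0 : 0 < cC.length := List.length_pos_iff.mpr hcC.1.1.1
    unfold walkLen at hlC; omega
  have hlen_D : cD.length = 2 * n + 1 := by
    have h0 : 0 < cD.length := List.length_pos_iff.mpr hcD.1.1.1
    unfold walkLen at hlD; omega
  have hcOK : CycOK G a n c := ⟨hc.2, by rw [← hc.1.2]; exact hc.2, hlen_c, hc.1.1.2⟩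
  have hBOK : CycOK G a n cB := ⟨hcB.2, by rw [← hcB.1.2]; exact hcB.2, hlen_B, hcB.1.1.2⟩
  have hCOK : CycOK G a n cC := ⟨hcC.2, by rw [← hcC.1.2]; exact hcC.2, hlen_C, hcC.1.1.2⟩
  have hDOK : CycOK G a n cD := ⟨hcD.2, by rw [← hcD.1.2]; exact hcD.2, hlen_D, hcD.1.1.2⟩
  have hrevC : CycOK G a n c.reverse := hcOK.reverse hsym
  have hrevB : CycOK G a n cB.reverse := hBOK.reverse hsym
  have hrevCC : CycOK G a n cC.reverse := hCOK.reverse hsym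
  have hrevD : CycOK G a n cD.reverse := hDOK.reverse hsym
  set NN := n * (2 * k + 1) with hNNdef
  obtain ⟨M, hM⟩ : ∃ M : ℕ, M = n * k := ⟨_, rfl⟩
  have hNN : NN = 2 * M + n := by rw [hNNdef, hM]; ring
  have hNZ : ((NN : ℕ) : ℤ) = 2 * (M : ℤ) + (n : ℤ) := by exact_mod_cast hNN
  have hMZ : ((M : ℕ) : ℤ) = (n : ℤ) * (k : ℤ) := by exact_mod_cast hM
  have e1 : k * (2 * n) = 2 * M := by rw [hM]; ring
  have e2 : (k + 1) * (2 * n) = 2 * M + 2 * n := by rw [hM]; ring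
  have he1 : ((k * (2 * n) : ℕ) : ℤ) = 2 * (M : ℤ) := by exact_mod_cast e1
  have he2 : (((k + 1) * (2 * n) : ℕ) : ℤ) = 2 * (M : ℤ) + 2 * (n : ℤ) := by exact_mod_cast e2
  have hshA : ∀ (X : List V) (s t : ℤ), s + 2 * (M : ℤ) = t → zcyc a n X s = zcyc a n X t := by
    intro X s t hst
    rw [show s = t + 2 * (n : ℤ) * (-(k : ℤ)) by rw [← hst, hMZ]; ring, zcyc_period]
  have hshB : ∀ (X : List V) (s t : ℤ), s = t + 2 * (M : ℤ) + 2 * (n : ℤ) →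
      zcyc a n X s = zcyc a n X t := by
    intro X s t hst
    rw [show s = t + 2 * (n : ℤ) * ((k : ℤ) + 1) by rw [hst, hMZ]; ring, zcyc_period]
  have hza : ∀ (X : List V), CycOK G a n X → ∀ e : ℤ,
      (e = 0 ∨ e = 2 * (n : ℤ) ∨ e = -(2 * (M : ℤ))) → zcyc a n X e = a := by
    intro X hX e he
    rcases he with rfl | rfl | rfl
    · exact zcyc_zero hX hn
    · exact zcyc_two_n hX hn
    · rw [show -(2 * (M : ℤ)) = 0 + 2 * (n : ℤ) * (-(k : ℤ)) by rw [hMZ]; ring, zcyc_period]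
      exact zcyc_zero hX hn
  refine ⟨annQ a n c cB cC cD, ?_, ?_, ?_, ?_, ?_, ?_, ?_, ?_, ?_⟩
  · -- adjacency
    intro u v h1 _ h3 _ h5
    obtain ⟨x, y⟩ := u
    obtain ⟨x', y'⟩ := v
    dsimp only at h1 h3 h5
    simp only [le_max_iff, le_abs] at h1 h3
    have hu : (n : ℤ) ≤ x ∨ x ≤ -(n : ℤ) ∨ (n : ℤ) ≤ y ∨ y ≤ -(n : ℤ) := by
      rcases h1 with (h | h) | (h | h) <;> omega
    have hv : (n : ℤ) ≤ x' ∨ x' ≤ -(n : ℤ) ∨ (n : ℤ) ≤ y' ∨ y' ≤ -(n : ℤ) := by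
      rcases h3 with (h | h) | (h | h) <;> omega
    have hcase : (x' = x + 1 ∧ y' = y) ∨ (x = x' + 1 ∧ y' = y) ∨
        (y' = y + 1 ∧ x' = x) ∨ (y = y' + 1 ∧ x' = x) := by
      rcases abs_cases (x - x') with ⟨u1, u2⟩ | ⟨u1, u2⟩ <;>
        rcases abs_cases (y - y') with ⟨w1, w2⟩ | ⟨w1, w2⟩ <;>
        rw [u1, w1] at h5 <;> omega
    rcases hcase with ⟨h6, h7⟩ | ⟨h6, h7⟩ | ⟨h6, h7⟩ | ⟨h6, h7⟩
    · rw [h6, h7]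
      exact annQ_adj_right hsym hn hcOK hBOK hCOK hDOK x y (by omega) (by omega)
    · rw [h6, h7]
      exact hsym (annQ_adj_right hsym hn hcOK hBOK hCOK hDOK x' y (by omega) (by omega))
    · rw [h6, h7]
      exact annQ_adj_up hsym hn hcOK hBOK hCOK hDOK x y (by omega) (by omega)
    · rw [h6, h7]
      exact hsym (annQ_adj_up hsym hn hcOK hBOK hCOK hDOK x y' (by omega) (by omega))
  · -- inner left
    apply List.ext_getElem
    · rw [readSeg_length, hlen_c]
    · intro i h1 h2
      rw [readSeg_length] at h1
      have h2n : i ≤ 2 * n := by omega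
      rw [readSeg_get', ← List.getD_eq_getElem c a h2, ← zcyc_castnat hcOK hn i h2n]
      simp only [annQ]
      split_ifs <;>
        first
          | (exfalso; omega)
          | exact congrArg (zcyc a n c) (by push_cast; omega)
  · -- inner top
    apply List.ext_getElem
    · rw [readSeg_length, hlen_B]
    · intro i h1 h2
      rw [readSeg_length] at h1
      have h2n : i ≤ 2 * n := by omega
      rw [readSeg_get', ← List.getD_eq_getElem cB a h2, ← zcyc_castnat hBOK hn i h2n]
      simp only [annQ]
      split_ifs <;>
        first
          | (exfalso; omega)
          | exact congrArg (zcyc a n cB) (by push_cast; omega)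
          | exact (hza c hcOK _ (by push_cast; omega)).trans
              (hza cB hBOK _ (by push_cast; omega)).symm
  · -- inner right
    apply List.ext_getElem
    · rw [readSeg_length, hlen_C]
    · intro i h1 h2
      rw [readSeg_length] at h1
      have h2n : i ≤ 2 * n := by omega
      rw [readSeg_get', ← List.getD_eq_getElem cC a h2, ← zcyc_castnat hCOK hn i h2n]
      simp only [annQ]
      split_ifs <;>
        first
          | (exfalso; omega)
          | exact congrArg (zcyc a n cC) (by push_cast; omega)
          | exact (hza cB hBOK _ (by push_cast; omega)).trans
              (hza cC hCOK _ (by push_cast; omega)).symm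
  · -- inner bottom
    apply List.ext_getElem
    · rw [readSeg_length, hlen_D]
    · intro i h1 h2
      rw [readSeg_length] at h1
      have h2n : i ≤ 2 * n := by omega
      rw [readSeg_get', ← List.getD_eq_getElem cD a h2, ← zcyc_castnat hDOK hn i h2n]
      simp only [annQ]
      split_ifs <;>
        first
          | (exfalso; omega)
          | exact congrArg (zcyc a n cD) (by push_cast; omega)
          | exact (hza cC hCOK _ (by push_cast; omega)).trans
              (hza cD hDOK _ (by push_cast; omega)).symm
          | exact (hza c hcOK _ (by push_cast; omega)).trans
              (hza cD hDOK _ (by push_cast; omega)).symm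
  · -- outer left
    apply List.ext_getElem
    · rw [readSeg_length, wcat_wpow_length hrevC hcOK]
      omega
    · intro i h1 h2
      rw [readSeg_length] at h1
      rw [readSeg_get', ← List.getD_eq_getElem _ a h2]
      rcases le_or_gt i (2 * M) with hsp | hsp
      · rw [wcat_wpow_getD_left hrevC hcOK hn k (k + 1) i (by omega), zcyc_rev hcOK hn]
        simp only [annQ]
        split_ifs <;>
          first
            | (exfalso; omega)
            | exact congrArg (zcyc a n c) (by push_cast; omega)
      · rw [wcat_wpow_getD_right hrevC hcOK hn k (k + 1) i (by omega) (by omega), he1]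
        simp only [annQ]
        split_ifs <;>
          first
            | (exfalso; omega)
            | exact hshA c _ _ (by push_cast; omega)
  · -- outer top
    apply List.ext_getElem
    · rw [readSeg_length, wcat_wpow_length hBOK hrevB]
      omega
    · intro i h1 h2
      rw [readSeg_length] at h1
      rw [readSeg_get', ← List.getD_eq_getElem _ a h2]
      rcases le_or_gt i (2 * M + 2 * n) with hsp | hsp
      · rw [wcat_wpow_getD_left hBOK hrevB hn (k + 1) k i (by omega)]
        simp only [annQ]
        split_ifs <;>
          first
            | (exfalso; omega)
            | exact congrArg (zcyc a n cB) (by push_cast; omega)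
            | exact (hza c hcOK _ (by push_cast; omega)).trans
                (hza cB hBOK _ (by push_cast; omega)).symm
      · rw [wcat_wpow_getD_right hBOK hrevB hn (k + 1) k i (by omega) (by omega),
          zcyc_rev hBOK hn, he2]
        simp only [annQ]
        split_ifs <;>
          first
            | (exfalso; omega)
            | exact hshB cB _ _ (by push_cast; omega)
  · -- outer right
    apply List.ext_getElem
    · rw [readSeg_length, wcat_wpow_length hrevCC hCOK]
      omega
    · intro i h1 h2
      rw [readSeg_length] at h1
      rw [readSeg_get', ← List.getD_eq_getElem _ a h2]
      rcases le_or_gt i (2 * M) with hsp | hsp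
      · rw [wcat_wpow_getD_left hrevCC hCOK hn k (k + 1) i (by omega), zcyc_rev hCOK hn]
        simp only [annQ]
        split_ifs <;>
          first
            | (exfalso; omega)
            | exact congrArg (zcyc a n cC) (by push_cast; omega)
            | exact (hza cB hBOK _ (by push_cast; omega)).trans
                (hza cC hCOK _ (by push_cast; omega)).symm
      · rw [wcat_wpow_getD_right hrevCC hCOK hn k (k + 1) i (by omega) (by omega), he1]
        simp only [annQ]
        split_ifs <;>
          first
            | (exfalso; omega)
            | exact hshA cC _ _ (by push_cast; omega)
  · -- outer bottom
    apply List.ext_getElem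
    · rw [readSeg_length, wcat_wpow_length hDOK hrevD]
      omega
    · intro i h1 h2
      rw [readSeg_length] at h1
      rw [readSeg_get', ← List.getD_eq_getElem _ a h2]
      rcases le_or_gt i (2 * M + 2 * n) with hsp | hsp
      · rw [wcat_wpow_getD_left hDOK hrevD hn (k + 1) k i (by omega)]
        simp only [annQ]
        split_ifs <;>
          first
            | (exfalso; omega)
            | exact congrArg (zcyc a n cD) (by push_cast; omega)
            | exact (hza cC hCOK _ (by push_cast; omega)).trans
                (hza cD hDOK _ (by push_cast; omega)).symm
            | exact (hza c hcOK _ (by push_cast; omega)).trans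
                (hza cD hDOK _ (by push_cast; omega)).symm
      · rw [wcat_wpow_getD_right hDOK hrevD hn (k + 1) k i (by omega) (by omega),
          zcyc_rev hDOK hn, he2]
        simp only [annQ]
        split_ifs <;>
          first
            | (exfalso; omega)
            | exact hshB cD _ _ (by push_cast; omega)
            | exact (hza c hcOK _ (by push_cast; omega)).trans
                (hza cD hDOK _ (by push_cast; omega)).symm
end

section
/- Let G be a finite connected undirected graph. If the two-dimensional homshift X²_G has the box-extension property, then every cycle of even length in G is square-decomposable (i.e. the even square group of G is trivial). -/
variable {V : Type}

/-- A configuration of the two-dimensional homshift on `G` (coordinates in `ℤ × ℤ`). -/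
def IsHomConfig2 (G : V → V → Prop) (x : ℤ × ℤ → V) : Prop :=
  ∀ u v : ℤ × ℤ, |u.1 - v.1| + |u.2 - v.2| = 1 → G (x u) (x v)

/-- The box `BB(m)`. -/
def box2 (m : ℕ) : Set (ℤ × ℤ) := {p : ℤ × ℤ | |p.1| ≤ (m : ℤ) ∧ |p.2| ≤ (m : ℤ)}

/-- A locally admissible pattern on `S`: adjacent positions of `S` carry adjacent
vertices of `G`. -/
def LocAdmOn (G : V → V → Prop) (S : Set (ℤ × ℤ)) (p : ℤ × ℤ → V) : Prop :=
  ∀ u ∈ S, ∀ v ∈ S, |u.1 - v.1| + |u.2 - v.2| = 1 → G (p u) (p v)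

/-- The box-extension property of the two-dimensional homshift on `G`. -/
def BoxExtension (G : V → V → Prop) : Prop :=
  ∃ r : ℕ, 1 ≤ r ∧ ∀ (n : ℕ) (p : ℤ × ℤ → V),
    LocAdmOn G (box2 (n + r + 1) \ box2 (n + r)) p →
    (∃ q : ℤ × ℤ → V, LocAdmOn G (box2 (n + r + 1) \ box2 n) q ∧
      ∀ u ∈ box2 (n + r + 1) \ box2 (n + r), q u = p u) →
    ∃ x : ℤ × ℤ → V, IsHomConfig2 G x ∧ ∀ u ∈ box2 (n + r + 1) \ box2 (n + r), x u = p u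

/- ============================================================ -/
/- Auxiliary development                                          -/
/- ============================================================ -/

section Basics

variable {G : V → V → Prop}

theorem sqe_ins {p q : List V} (h : SqStep G p q) : SquareEquiv G p q :=
  Relation.ReflTransGen.single (Or.inl h)

theorem sqe_del {p q : List V} (h : SqStep G p q) : SquareEquiv G q p :=
  Relation.ReflTransGen.single (Or.inr h)

theorem sqe_trans {p q r : List V} (h : SquareEquiv G p q) (h' : SquareEquiv G q r) :
    SquareEquiv G p r := Relation.ReflTransGen.trans h h'

theorem sqe_symm {p q : List V} (h : SquareEquiv G p q) : SquareEquiv G q p := by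
  induction h with
  | refl => exact Relation.ReflTransGen.refl
  | tail _ h ih => exact Relation.ReflTransGen.trans (Relation.ReflTransGen.single h.symm) ih

theorem sqe_bt (l₁ l₂ : List V) (u v : V) (h : G u v) (h' : G v u) :
    SquareEquiv G (l₁ ++ u :: l₂) (l₁ ++ u :: v :: u :: l₂) :=
  sqe_ins (SqStep.backtrack l₁ l₂ u v h h')

theorem sqe_sq4 (l₁ l₂ : List V) (a b c d : V)
    (hab : G a b) (hba : G b a) (hbc : G b c) (hcb : G c b)
    (hcd : G c d) (hdc : G d c) (hda : G d a) (had : G a d) :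
    SquareEquiv G (l₁ ++ a :: l₂) (l₁ ++ a :: b :: c :: d :: a :: l₂) := by
  by_cases h1 : a = c
  · subst h1
    have s1 := sqe_bt l₁ l₂ a b hab hba
    have s2 := sqe_bt (l₁ ++ [a, b]) l₂ a d had hda
    simp only [List.append_assoc, List.cons_append, List.nil_append] at s2
    exact sqe_trans s1 s2
  · by_cases h2 : b = d
    · subst h2
      have s1 := sqe_bt l₁ l₂ a b hab hba
      have s2 := sqe_bt (l₁ ++ [a]) (a :: l₂) b c hbc hcb
      simp only [List.append_assoc, List.cons_append, List.nil_append] at s2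
      exact sqe_trans s1 s2
    · exact sqe_ins (SqStep.square l₁ l₂ a b c d hab hbc hcd hda h1 h2)

end Basics

theorem sqe_map_step {A B : Type} {GA : A → A → Prop} {GB : B → B → Prop} (f : A → B)
    (hf : ∀ u v, GA u v → GB (f u) (f v)) (hf' : ∀ u v, GA u v → GB (f v) (f u))
    {p q : List A} (h : SqStep GA p q) : SquareEquiv GB (p.map f) (q.map f) := by
  cases h with
  | backtrack l₁ l₂ u v huv hvu =>
      simp only [List.map_append, List.map_cons]
      exact sqe_bt _ _ _ _ (hf _ _ huv) (hf' _ _ huv)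
  | square l₁ l₂ u x y z h1 h2 h3 h4 hne1 hne2 =>
      simp only [List.map_append, List.map_cons]
      exact sqe_sq4 _ _ _ _ _ _ (hf _ _ h1) (hf' _ _ h1) (hf _ _ h2) (hf' _ _ h2)
        (hf _ _ h3) (hf' _ _ h3) (hf _ _ h4) (hf' _ _ h4)

theorem sqe_map {A B : Type} {GA : A → A → Prop} {GB : B → B → Prop} (f : A → B)
    (hf : ∀ u v, GA u v → GB (f u) (f v)) (hf' : ∀ u v, GA u v → GB (f v) (f u))
    {p q : List A} (h : SquareEquiv GA p q) : SquareEquiv GB (p.map f) (q.map f) := by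
  induction h with
  | refl => exact Relation.ReflTransGen.refl
  | tail _ h ih =>
      cases h with
      | inl h => exact sqe_trans ih (sqe_map_step f hf hf' h)
      | inr h => exact sqe_trans ih (sqe_symm (sqe_map_step f hf hf' h))

/- ================= The grid ================= -/

def grid2 (u v : ℤ × ℤ) : Prop := |u.1 - v.1| + |u.2 - v.2| = 1

theorem grid2_iff {u v : ℤ × ℤ} : grid2 u v ↔
    (v.1 = u.1 + 1 ∧ v.2 = u.2) ∨ (u.1 = v.1 + 1 ∧ v.2 = u.2) ∨
    (v.2 = u.2 + 1 ∧ v.1 = u.1) ∨ (u.2 = v.2 + 1 ∧ v.1 = u.1) := by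
  unfold grid2
  rw [Int.abs_eq_natAbs, Int.abs_eq_natAbs]
  omega

theorem grid2_mk' (a b c d : ℤ)
    (h : (c = a + 1 ∧ d = b) ∨ (a = c + 1 ∧ d = b) ∨ (d = b + 1 ∧ c = a) ∨ (b = d + 1 ∧ c = a)) :
    grid2 (a, b) (c, d) := grid2_iff.mpr h

theorem grid2_symm {u v : ℤ × ℤ} (h : grid2 u v) : grid2 v u := by
  rw [grid2_iff] at h ⊢; omega

theorem grid2_comm_step (l₁ l₂ : List (ℤ × ℤ)) (i j d : ℤ) (hd : d = 1 ∨ d = -1) :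
    SquareEquiv grid2 (l₁ ++ (i,j) :: (i+1,j) :: (i+1,j+d) :: l₂)
      (l₁ ++ (i,j) :: (i,j+d) :: (i+1,j+d) :: l₂) := by
  have g1 : grid2 (i,j) (i,j+d) := grid2_mk' _ _ _ _ (by omega)
  have g2 : grid2 (i,j+d) (i+1,j+d) := grid2_mk' _ _ _ _ (by omega)
  have g3 : grid2 (i+1,j+d) (i+1,j) := grid2_mk' _ _ _ _ (by omega)
  have g4 : grid2 (i+1,j) (i,j) := grid2_mk' _ _ _ _ (by omega)
  have g4' : grid2 (i,j) (i+1,j) := grid2_mk' _ _ _ _ (by omega)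
  have g3' : grid2 (i+1,j) (i+1,j+d) := grid2_mk' _ _ _ _ (by omega)
  have hne1 : (i,j) ≠ (i+1,j+d) := by intro h; rw [Prod.mk.injEq] at h; omega
  have hne2 : (i,j+d) ≠ (i+1,j) := by intro h; rw [Prod.mk.injEq] at h; omega
  have s1 : SqStep grid2 (l₁ ++ (i,j) :: (i+1,j) :: (i+1,j+d) :: l₂)
      (l₁ ++ (i,j) :: (i,j+d) :: (i+1,j+d) :: (i+1,j) :: (i,j) :: (i+1,j) :: (i+1,j+d) :: l₂) :=
    SqStep.square l₁ ((i+1,j) :: (i+1,j+d) :: l₂) (i,j) (i,j+d) (i+1,j+d) (i+1,j) g1 g2 g3 g4 hne1 hne2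
  have s2 : SqStep grid2 (l₁ ++ (i,j) :: (i,j+d) :: (i+1,j+d) :: (i+1,j) :: (i+1,j+d) :: l₂)
      (l₁ ++ (i,j) :: (i,j+d) :: (i+1,j+d) :: (i+1,j) :: (i,j) :: (i+1,j) :: (i+1,j+d) :: l₂) := by
    have := SqStep.backtrack (G := grid2) (l₁ ++ [(i,j),(i,j+d),(i+1,j+d)]) ((i+1,j+d) :: l₂)
      (i+1,j) (i,j) g4 g4'
    simpa using this
  have s3 : SqStep grid2 (l₁ ++ (i,j) :: (i,j+d) :: (i+1,j+d) :: l₂)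
      (l₁ ++ (i,j) :: (i,j+d) :: (i+1,j+d) :: (i+1,j) :: (i+1,j+d) :: l₂) := by
    have := SqStep.backtrack (G := grid2) (l₁ ++ [(i,j),(i,j+d)]) l₂ (i+1,j+d) (i+1,j) g3 g3'
    simpa using this
  exact sqe_trans (sqe_ins s1) (sqe_trans (sqe_del s2) (sqe_del s3))

theorem grid2_shiftRun (run : List (ℤ × ℤ)) : ∀ (l₁ l₂ : List (ℤ × ℤ)) (a b : ℤ × ℤ),
    List.Chain' grid2 run →
    run.head? = some (a.1 + 1, a.2) →
    run.getLast? = some (b.1 + 1, b.2) →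
    (∀ r ∈ run, r.1 = a.1 + 1) →
    SquareEquiv grid2 (l₁ ++ a :: (run ++ b :: l₂))
      (l₁ ++ (run.map fun r => (r.1 - 1, r.2)) ++ l₂) := by
  induction run with
  | nil => intro l₁ l₂ a b _ hh _ _; simp at hh
  | cons r rest ih =>
    intro l₁ l₂ a b hc hh hl hmem
    rw [List.head?_cons, Option.some.injEq] at hh
    subst hh
    cases rest with
    | nil =>
      simp only [List.getLast?_singleton, Option.some.injEq, Prod.mk.injEq] at hl
      obtain rfl : a = b := Prod.ext_iff.mpr ⟨by omega, by omega⟩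
      have heq : ([(a.1 + 1, a.2)].map fun r : ℤ × ℤ => (r.1 - 1, r.2)) = [a] := by
        simp
      rw [heq]
      have g : grid2 a (a.1+1, a.2) := grid2_iff.mpr (Or.inl ⟨rfl, rfl⟩)
      have g' : grid2 (a.1+1, a.2) a := grid2_iff.mpr (Or.inr (Or.inl ⟨rfl, rfl⟩))
      have := sqe_del (SqStep.backtrack (G := grid2) l₁ l₂ a (a.1+1, a.2) g g')
      simpa using this
    | cons r' rest' =>
      rw [List.Chain', List.isChain_cons_cons] at hc
      obtain ⟨hrr', hc'⟩ := hc
      have hr'1 : r'.1 = a.1 + 1 := hmem r' (by simp)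
      have h5 := grid2_iff.mp hrr'
      dsimp only at h5
      obtain ⟨d, hd12, hr'⟩ : ∃ d, (d = 1 ∨ d = -1) ∧ r' = (a.1 + 1, a.2 + d) := by
        refine ⟨r'.2 - a.2, by omega, Prod.ext_iff.mpr ⟨by omega, by omega⟩⟩
      subst hr'
      have step1 := grid2_comm_step l₁ (rest' ++ b :: l₂) a.1 a.2 d hd12
      have step2 := ih (l₁ ++ [a]) l₂ (a.1, a.2 + d) b hc' rfl
        (by rw [List.getLast?_cons_cons] at hl; exact hl)
        (by intro x hx; exact hmem x (List.mem_cons_of_mem _ hx))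
      simp only [List.cons_append, List.append_assoc, List.nil_append, List.map_cons,
        Prod.mk.eta, add_sub_cancel_right] at step1 step2 ⊢
      exact sqe_trans step1 step2

theorem grid2_exists_max : ∀ (p : List (ℤ × ℤ)), p ≠ [] →
    ∃ M : ℤ, (∀ u ∈ p, u.1 ≤ M) ∧ ∃ u ∈ p, u.1 = M := by
  intro p
  induction p with
  | nil => intro h; exact absurd rfl h
  | cons x t ih =>
    intro _
    rcases eq_or_ne t [] with rfl | ht
    · exact ⟨x.1, by simp, x, by simp⟩
    · obtain ⟨M, hub, u, hu, huM⟩ := ih ht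
      by_cases h : x.1 ≤ M
      · refine ⟨M, ?_, u, by simp [hu], huM⟩
        intro w hw
        rcases List.mem_cons.mp hw with rfl | hw
        · exact h
        · exact hub w hw
      · refine ⟨x.1, ?_, x, by simp⟩
        intro w hw
        rcases List.mem_cons.mp hw with rfl | hw
        · exact le_refl _
        · exact le_trans (hub w hw) (by omega)

theorem grid2_takeRun (M : ℤ) : ∀ (q : List (ℤ × ℤ)),
    (∀ x ∈ q.head?, x.1 = M) → (∀ x ∈ q.getLast?, x.1 ≠ M) → q ≠ [] →
    ∃ run b l₂, q = run ++ b :: l₂ ∧ run ≠ [] ∧ (∀ r ∈ run, r.1 = M) ∧ b.1 ≠ M := by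
  intro q
  induction q with
  | nil => intro _ _ h; exact absurd rfl h
  | cons r t ih =>
    intro hh hl _
    have hrM : r.1 = M := hh r (by simp)
    cases t with
    | nil =>
      exfalso
      exact hl r (by simp) hrM
    | cons s t' =>
      by_cases hs : s.1 = M
      · obtain ⟨run, b, l₂, hdec, hne, hrun, hb⟩ := ih
          (by intro x hx; simp at hx; subst hx; exact hs)
          (by intro x hx; refine hl x ?_; rwa [List.getLast?_cons_cons])
          (by simp)
        exact ⟨r :: run, b, l₂, by rw [hdec]; rfl, by simp,
          by intro w hw; rcases List.mem_cons.mp hw with rfl | hw;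
             exacts [hrM, hrun w hw], hb⟩
      · exact ⟨[r], s, t', rfl, by simp, by intro w hw; simp at hw; subst hw; exact hrM, hs⟩

theorem grid2_splitRun (M : ℤ) : ∀ (p : List (ℤ × ℤ)),
    (∀ x ∈ p.head?, x.1 ≠ M) → (∀ x ∈ p.getLast?, x.1 ≠ M) → (∃ u ∈ p, u.1 = M) →
    ∃ l₁ a run b l₂, p = l₁ ++ a :: (run ++ b :: l₂) ∧ run ≠ [] ∧
      (∀ r ∈ run, r.1 = M) ∧ a.1 ≠ M ∧ b.1 ≠ M := by
  intro p
  induction p with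
  | nil => intro _ _ h; simp at h
  | cons c t ih =>
    intro hh hl hex
    have hcM : c.1 ≠ M := hh c (by simp)
    have htex : ∃ u ∈ t, u.1 = M := by
      obtain ⟨u, hu, huM⟩ := hex
      rcases List.mem_cons.mp hu with rfl | hu
      · exact absurd huM hcM
      · exact ⟨u, hu, huM⟩
    have htne : t ≠ [] := by
      intro h; rw [h] at htex; simp at htex
    obtain ⟨s, t', rfl⟩ := List.exists_cons_of_ne_nil htne
    by_cases hs : s.1 = M
    · obtain ⟨run, b, l₂, hdec, hne, hrun, hb⟩ := grid2_takeRun M (s :: t')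
        (by intro x hx; simp at hx; subst hx; exact hs)
        (by intro x hx; refine hl x ?_; rwa [List.getLast?_cons_cons]) (by simp)
      exact ⟨[], c, run, b, l₂, by rw [List.nil_append, hdec], hne, hrun, hcM, hb⟩
    · obtain ⟨l₁, a, run, b, l₂, hdec, hne, hrun, ha, hb⟩ := ih
        (by intro x hx; simp at hx; subst hx; exact hs)
        (by intro x hx; refine hl x ?_; rwa [List.getLast?_cons_cons]) htex
      exact ⟨c :: l₁, a, run, b, l₂, by rw [hdec]; rfl, hne, hrun, ha, hb⟩

def gsh : ℤ × ℤ → ℤ × ℤ := fun r => (r.1 - 1, r.2)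

theorem grid2_surgery (z : ℤ × ℤ) (p : List (ℤ × ℤ)) (hc : List.Chain' grid2 p)
    (hh : p.head? = some z) (hl : p.getLast? = some z) (hex : ∃ u ∈ p, z.1 < u.1) :
    ∃ q, List.Chain' grid2 q ∧ q.head? = some z ∧ q.getLast? = some z ∧
      q.length + 2 = p.length ∧ SquareEquiv grid2 p q := by
  have hpne : p ≠ [] := by intro h; rw [h] at hh; simp at hh
  obtain ⟨M, hub, w, hw, hwM⟩ := grid2_exists_max p hpne
  have hzM : z.1 < M := by
    obtain ⟨u, hu, hzu⟩ := hex
    exact lt_of_lt_of_le hzu (hub u hu)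
  obtain ⟨l₁, a, run, b, l₂, hdec, hrun_ne, hrunM, haM, hbM⟩ := grid2_splitRun M p
    (by intro x hx; rw [hh] at hx; simp at hx; subst hx; omega)
    (by intro x hx; rw [hl] at hx; simp at hx; subst hx; omega)
    ⟨w, hw, hwM⟩
  subst hdec
  -- decompose the chain
  obtain ⟨hcl₁, hc1, hjun1⟩ := List.isChain_append.mp hc
  have hc2 : List.Chain' grid2 (run ++ b :: l₂) := hc1.tail
  obtain ⟨hcrun, hcbl₂, hjun2⟩ := List.isChain_append.mp hc2
  obtain ⟨r₀, run', rfl⟩ := List.exists_cons_of_ne_nil hrun_ne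
  have har₀ : grid2 a r₀ := by
    rw [List.cons_append] at hc1
    exact (List.isChain_cons_cons.mp hc1).1
  have hamem : a ∈ l₁ ++ a :: ((r₀ :: run') ++ b :: l₂) := by simp
  have hbmem : b ∈ l₁ ++ a :: ((r₀ :: run') ++ b :: l₂) := by simp
  have har := grid2_iff.mp har₀
  have hr₀M : r₀.1 = M := hrunM r₀ (by simp)
  have haub : a.1 ≤ M := hub a hamem
  have hhead_cond : (r₀ :: run').head? = some (a.1 + 1, a.2) := by
    rw [List.head?_cons, Option.some.injEq]
    exact Prod.ext_iff.mpr ⟨by omega, by omega⟩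
  -- last of run
  have hrun_last : (r₀ :: run').getLast? = some ((r₀ :: run').getLast (by simp)) :=
    List.getLast?_eq_getLast_of_ne_nil _
  set rl := (r₀ :: run').getLast (by simp) with hrl
  have hrlM : rl.1 = M := hrunM rl (List.getLast_mem _)
  have hrlb : grid2 rl b := by
    exact hjun2 rl (by rw [hrun_last]; rfl) b rfl
  have hbub : b.1 ≤ M := hub b hbmem
  have hrlb' := grid2_iff.mp hrlb
  have hlast_cond : (r₀ :: run').getLast? = some (b.1 + 1, b.2) := by
    rw [hrun_last, Option.some.injEq]
    exact Prod.ext_iff.mpr ⟨by omega, by omega⟩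
  have hmemrun : ∀ x ∈ (r₀ :: run'), x.1 = a.1 + 1 := by
    intro x hx
    have := hrunM x hx
    omega
  have hequiv := grid2_shiftRun (r₀ :: run') l₁ l₂ a b hcrun hhead_cond hlast_cond hmemrun
  have hshr₀ : gsh r₀ = a := by
    refine Prod.ext_iff.mpr ⟨?_, ?_⟩ <;> dsimp [gsh] <;> omega
  have hshrl : gsh rl = b := by
    refine Prod.ext_iff.mpr ⟨?_, ?_⟩ <;> dsimp [gsh] <;> omega
  have hmap_last : ((r₀ :: run').map gsh).getLast? = some b := by
    rw [List.getLast?_map, hlast_cond]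
    simp only [Option.map_some]
    congr 1
    refine Prod.ext_iff.mpr ⟨?_, ?_⟩ <;> dsimp [gsh] <;> omega
  have hmap_head : ((r₀ :: run').map gsh).head? = some a := by
    rw [List.head?_map, List.head?_cons, Option.map_some, hshr₀]
  refine ⟨l₁ ++ ((r₀ :: run').map gsh) ++ l₂, ?_, ?_, ?_, ?_, hequiv⟩
  · -- chain
    rw [List.append_assoc, List.Chain', List.isChain_append]
    refine ⟨hcl₁, ?_, ?_⟩
    · rw [List.isChain_append]
      refine ⟨?_, (List.isChain_cons.mp hcbl₂).2, ?_⟩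
      · refine (List.isChain_map gsh).mpr (hcrun.imp (fun x y h => ?_))
        have h2 := grid2_iff.mp h
        show grid2 (x.1 - 1, x.2) (y.1 - 1, y.2)
        exact grid2_mk' _ _ _ _ (by omega)
      · intro u hu v hv
        rw [hmap_last] at hu
        simp at hu
        subst hu
        exact (List.isChain_cons.mp hcbl₂).1 v hv
    · intro u hu v hv
      have hv' : v = a := by
        rw [List.head?_append, hmap_head] at hv
        simp at hv
        exact hv.symm
      rw [hv']
      exact hjun1 u hu a rfl
  · -- head
    rw [List.append_assoc, List.head?_append, List.head?_append, hmap_head, Option.some_or]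
    rw [List.head?_append, List.head?_cons] at hh
    exact hh
  · -- last
    have e1 : (l₁ ++ a :: ((r₀ :: run') ++ b :: l₂)).getLast? = l₂.getLast?.or (some b) := by
      have e : l₁ ++ a :: ((r₀ :: run') ++ b :: l₂) = (l₁ ++ a :: (r₀ :: run') ++ [b]) ++ l₂ := by
        simp
      rw [e, List.getLast?_append, List.getLast?_concat]
    have e2 : (l₁ ++ ((r₀ :: run').map gsh) ++ l₂).getLast? = l₂.getLast?.or (some b) := by
      rw [List.getLast?_append, List.getLast?_append, hmap_last, Option.some_or]
    rw [e2, ← e1, hl]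
  · -- length
    simp only [List.length_append, List.length_map, List.length_cons]
    omega

theorem grid2_reduce (φ ψ : ℤ × ℤ → ℤ × ℤ)
    (hφ : ∀ u v, grid2 u v → grid2 (φ u) (φ v)) (hψ : ∀ u v, grid2 u v → grid2 (ψ u) (ψ v))
    (hinv : ∀ u, ψ (φ u) = u)
    (p : List (ℤ × ℤ)) (z : ℤ × ℤ) (hc : List.Chain' grid2 p) (hh : p.head? = some z)
    (hl : p.getLast? = some z) (hex : ∃ u ∈ p, (φ z).1 < (φ u).1) :
    ∃ q, List.Chain' grid2 q ∧ q.head? = some z ∧ q.getLast? = some z ∧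
      q.length + 2 = p.length ∧ SquareEquiv grid2 p q := by
  obtain ⟨q', hc', hh', hl', hlen', he'⟩ := grid2_surgery (φ z) (p.map φ)
    ((List.isChain_map φ).mpr (hc.imp hφ))
    (by rw [List.head?_map, hh]; rfl)
    (by rw [List.getLast?_map, hl]; rfl)
    (by obtain ⟨u, hu, h⟩ := hex; exact ⟨φ u, List.mem_map_of_mem hu, h⟩)
  have hpp : (p.map φ).map ψ = p := by
    rw [List.map_map]
    conv_rhs => rw [← List.map_id p]
    exact List.map_congr_left (fun x _ => hinv x)
  refine ⟨q'.map ψ, (List.isChain_map ψ).mpr (hc'.imp hψ), ?_, ?_, ?_, ?_⟩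
  · rw [List.head?_map, hh', Option.map_some, hinv]
  · rw [List.getLast?_map, hl', Option.map_some, hinv]
  · rw [List.length_map]
    rw [List.length_map] at hlen'
    exact hlen'
  · have := sqe_map ψ (fun u v h => hψ u v h) (fun u v h => hψ v u (grid2_symm h)) he'
    rwa [hpp] at this

theorem grid2_null_aux : ∀ N : ℕ, ∀ (p : List (ℤ × ℤ)) (z : ℤ × ℤ), p.length ≤ N →
    List.Chain' grid2 p → p.head? = some z → p.getLast? = some z →
    SquareEquiv grid2 p [z] := by
  intro N
  induction N with
  | zero =>
    intro p z hlen _ hh _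
    interval_cases h : p.length
    · rw [List.length_eq_zero_iff] at h; subst h; simp at hh
  | succ N ih =>
    intro p z hlen hc hh hl
    match p, hh with
    | [w], hh =>
      simp only [List.head?_cons, Option.some.injEq] at hh
      subst hh
      exact Relation.ReflTransGen.refl
    | w :: s :: t, hh =>
      have hred : ∀ q : List (ℤ × ℤ), List.Chain' grid2 q → q.head? = some z →
          q.getLast? = some z → q.length + 2 = (w :: s :: t).length →
          SquareEquiv grid2 (w :: s :: t) q → SquareEquiv grid2 (w :: s :: t) [z] := by
        intro q hcq hhq hlq hlenq heq
        refine sqe_trans heq (ih q z ?_ hcq hhq hlq)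
        simp only [List.length_cons] at hlenq hlen
        omega
      by_cases h1 : ∃ u ∈ w :: s :: t, z.1 < u.1
      · obtain ⟨q, hcq, hhq, hlq, hlenq, heq⟩ := grid2_surgery z _ hc hh hl h1
        exact hred q hcq hhq hlq hlenq heq
      by_cases h2 : ∃ u ∈ w :: s :: t, u.1 < z.1
      · obtain ⟨u, hu, hlt⟩ := h2
        obtain ⟨q, hcq, hhq, hlq, hlenq, heq⟩ := grid2_reduce
          (fun w => (-w.1, w.2)) (fun w => (-w.1, w.2))
          (fun u v h => by
            have := grid2_iff.mp h
            exact grid2_mk' _ _ _ _ (by omega))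
          (fun u v h => by
            have := grid2_iff.mp h
            exact grid2_mk' _ _ _ _ (by omega))
          (fun u => by simp)
          _ z hc hh hl ⟨u, hu, by dsimp only; omega⟩
        exact hred q hcq hhq hlq hlenq heq
      by_cases h3 : ∃ u ∈ w :: s :: t, z.2 < u.2
      · obtain ⟨u, hu, hlt⟩ := h3
        obtain ⟨q, hcq, hhq, hlq, hlenq, heq⟩ := grid2_reduce
          (fun w => (w.2, w.1)) (fun w => (w.2, w.1))
          (fun u v h => by
            have := grid2_iff.mp h
            exact grid2_mk' _ _ _ _ (by omega))
          (fun u v h => by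
            have := grid2_iff.mp h
            exact grid2_mk' _ _ _ _ (by omega))
          (fun u => by simp)
          _ z hc hh hl ⟨u, hu, by dsimp only; omega⟩
        exact hred q hcq hhq hlq hlenq heq
      by_cases h4 : ∃ u ∈ w :: s :: t, u.2 < z.2
      · obtain ⟨u, hu, hlt⟩ := h4
        obtain ⟨q, hcq, hhq, hlq, hlenq, heq⟩ := grid2_reduce
          (fun w => (-w.2, w.1)) (fun w => (w.2, -w.1))
          (fun u v h => by
            have := grid2_iff.mp h
            exact grid2_mk' _ _ _ _ (by omega))
          (fun u v h => by
            have := grid2_iff.mp h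
            exact grid2_mk' _ _ _ _ (by omega))
          (fun u => by simp)
          _ z hc hh hl ⟨u, hu, by dsimp only; omega⟩
        exact hred q hcq hhq hlq hlenq heq
      · exfalso
        push_neg at h1 h2 h3 h4
        have hwz : w = z := by
          simp only [List.head?_cons, Option.some.injEq] at hh
          exact hh
        subst hwz
        have hs : s ∈ w :: s :: t := by simp
        have h5 : s = w := Prod.ext_iff.mpr
          ⟨le_antisymm (h1 s hs) (h2 s hs), le_antisymm (h3 s hs) (h4 s hs)⟩
        have hgs : grid2 w s := (List.isChain_cons_cons.mp hc).1
        rw [h5] at hgs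
        have := grid2_iff.mp hgs
        omega

theorem grid2_null (p : List (ℤ × ℤ)) (z : ℤ × ℤ) (hc : List.Chain' grid2 p)
    (hh : p.head? = some z) (hl : p.getLast? = some z) : SquareEquiv grid2 p [z] :=
  grid2_null_aux p.length p z le_rfl hc hh hl

/- ================= The annulus pattern ================= -/

def patt (c : ℕ → V) (a : V) (M : ℕ) : ℤ × ℤ → V := fun u =>
  if -u.1 ≤ u.2 ∧ u.2 ≤ u.1 ∧ u.1 + u.2 ≤ (M : ℤ) then c (u.1 + u.2).toNat
  else if (u.1 + u.2) % 2 = 0 then a else c (M - 1)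

section Patt

variable {G : V → V → Prop} (hsym : Symmetric G) (c : ℕ → V) (a : V) (M : ℕ)
  (hadjc : ∀ k : ℕ, k < M → G (c k) (c (k + 1))) (h0 : c 0 = a) (hM : c M = a)
  (hM2 : 2 ≤ M) (hMe : M % 2 = 0)

include hsym hadjc h0 hM hM2 hMe

theorem patt_G_aM1 : G a (c (M - 1)) := by
  have h := hadjc (M - 1) (by omega)
  have h1 : M - 1 + 1 = M := by omega
  rw [h1, hM] at h
  exact hsym h

theorem patt_G_M1a : G (c (M - 1)) a := by
  have h := hadjc (M - 1) (by omega)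
  have h1 : M - 1 + 1 = M := by omega
  rw [h1, hM] at h
  exact h

theorem patt_adj_active (u v : ℤ × ℤ) (hbig : (M : ℤ) + 2 < u.1)
    (hj1 : -u.1 ≤ u.2) (hj2 : u.2 ≤ u.1) (hsum : u.1 + u.2 ≤ (M : ℤ))
    (hdir : (v.1 = u.1 + 1 ∧ v.2 = u.2) ∨ (v.1 = u.1 - 1 ∧ v.2 = u.2) ∨
            (v.1 = u.1 ∧ v.2 = u.2 + 1) ∨ (v.1 = u.1 ∧ v.2 = u.2 - 1)) :
    G (patt c a M u) (patt c a M v) := by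
  have hjneg : u.2 + 2 < 0 := by omega
  have hPu : patt c a M u = c (u.1 + u.2).toNat := by
    unfold patt
    rw [if_pos ⟨hj1, hj2, hsum⟩]
  rw [hPu]
  rcases hdir with ⟨h1, h2⟩ | ⟨h1, h2⟩ | ⟨h1, h2⟩ | ⟨h1, h2⟩
  · -- v = u + e1
    by_cases hlast : u.1 + u.2 = (M : ℤ)
    · have hPv : patt c a M v = c (M - 1) := by
        unfold patt
        rw [if_neg (by omega), if_neg (by omega)]
      rw [hPv]
      have h3 : (u.1 + u.2).toNat = M := by omega
      rw [h3, hM]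
      exact patt_G_aM1 hsym c a M hadjc h0 hM hM2 hMe
    · have hPv : patt c a M v = c ((u.1 + u.2).toNat + 1) := by
        unfold patt
        rw [if_pos ⟨by omega, by omega, by omega⟩]
        congr 1
        omega
      rw [hPv]
      exact hadjc (u.1 + u.2).toNat (by omega)
  · -- v = u - e1
    by_cases hfirst : u.1 + u.2 = 0
    · have hPv : patt c a M v = c (M - 1) := by
        unfold patt
        rw [if_neg (by omega), if_neg (by omega)]
      rw [hPv]
      have h3 : (u.1 + u.2).toNat = 0 := by omega
      rw [h3, h0]
      exact patt_G_aM1 hsym c a M hadjc h0 hM hM2 hMe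
    · have hPv : patt c a M v = c ((u.1 + u.2).toNat - 1) := by
        unfold patt
        rw [if_pos ⟨by omega, by omega, by omega⟩]
        congr 1
        omega
      rw [hPv]
      have h4 := hadjc ((u.1 + u.2).toNat - 1) (by omega)
      have h5 : (u.1 + u.2).toNat - 1 + 1 = (u.1 + u.2).toNat := by omega
      rw [h5] at h4
      exact hsym h4
  · -- v = u + e2
    by_cases hlast : u.1 + u.2 = (M : ℤ)
    · have hPv : patt c a M v = c (M - 1) := by
        unfold patt
        rw [if_neg (by omega), if_neg (by omega)]
      rw [hPv]
      have h3 : (u.1 + u.2).toNat = M := by omega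
      rw [h3, hM]
      exact patt_G_aM1 hsym c a M hadjc h0 hM hM2 hMe
    · have hPv : patt c a M v = c ((u.1 + u.2).toNat + 1) := by
        unfold patt
        rw [if_pos ⟨by omega, by omega, by omega⟩]
        congr 1
        omega
      rw [hPv]
      exact hadjc (u.1 + u.2).toNat (by omega)
  · -- v = u - e2
    by_cases hfirst : u.1 + u.2 = 0
    · have hPv : patt c a M v = c (M - 1) := by
        unfold patt
        rw [if_neg (by omega), if_neg (by omega)]
      rw [hPv]
      have h3 : (u.1 + u.2).toNat = 0 := by omega
      rw [h3, h0]
      exact patt_G_aM1 hsym c a M hadjc h0 hM hM2 hMe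
    · have hPv : patt c a M v = c ((u.1 + u.2).toNat - 1) := by
        unfold patt
        rw [if_pos ⟨by omega, by omega, by omega⟩]
        congr 1
        omega
      rw [hPv]
      have h4 := hadjc ((u.1 + u.2).toNat - 1) (by omega)
      have h5 : (u.1 + u.2).toNat - 1 + 1 = (u.1 + u.2).toNat := by omega
      rw [h5] at h4
      exact hsym h4

theorem patt_adj (u v : ℤ × ℤ)
    (hEu : (M : ℤ) + 2 < |u.1| ∨ (M : ℤ) + 2 < |u.2|)
    (hEv : (M : ℤ) + 2 < |v.1| ∨ (M : ℤ) + 2 < |v.2|)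
    (hd : |u.1 - v.1| + |u.2 - v.2| = 1) :
    G (patt c a M u) (patt c a M v) := by
  rw [Int.abs_eq_natAbs, Int.abs_eq_natAbs] at hEu hEv hd
  have hdir : (v.1 = u.1 + 1 ∧ v.2 = u.2) ∨ (v.1 = u.1 - 1 ∧ v.2 = u.2) ∨
      (v.1 = u.1 ∧ v.2 = u.2 + 1) ∨ (v.1 = u.1 ∧ v.2 = u.2 - 1) := by omega
  by_cases hAu : -u.1 ≤ u.2 ∧ u.2 ≤ u.1 ∧ u.1 + u.2 ≤ (M : ℤ)
  · have hbig : (M : ℤ) + 2 < u.1 := by omega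
    exact patt_adj_active hsym c a M hadjc h0 hM hM2 hMe u v hbig hAu.1 hAu.2.1 hAu.2.2 hdir
  · by_cases hAv : -v.1 ≤ v.2 ∧ v.2 ≤ v.1 ∧ v.1 + v.2 ≤ (M : ℤ)
    · have hbig : (M : ℤ) + 2 < v.1 := by omega
      refine hsym (patt_adj_active hsym c a M hadjc h0 hM hM2 hMe v u hbig hAv.1 hAv.2.1 hAv.2.2 ?_)
      omega
    · have hPu : patt c a M u = if (u.1 + u.2) % 2 = 0 then a else c (M - 1) := by
        unfold patt; rw [if_neg hAu]
      have hPv : patt c a M v = if (v.1 + v.2) % 2 = 0 then a else c (M - 1) := by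
        unfold patt; rw [if_neg hAv]
      rw [hPu, hPv]
      by_cases hpar : (u.1 + u.2) % 2 = 0
      · rw [if_pos hpar, if_neg (by omega)]
        exact patt_G_aM1 hsym c a M hadjc h0 hM hM2 hMe
      · rw [if_neg hpar, if_pos (by omega)]
        exact patt_G_M1a hsym c a M hadjc h0 hM hM2 hMe

end Patt

/- ================= The frame loop ================= -/

def fpos (m : ℕ) (t : ℕ) : ℤ × ℤ :=
  if t ≤ 2 * m then ((m : ℤ), (t : ℤ) - m)
  else if t ≤ 4 * m then (3 * (m : ℤ) - t, (m : ℤ))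
  else if t ≤ 6 * m then (-(m : ℤ), 5 * (m : ℤ) - t)
  else ((t : ℤ) - 7 * m, -(m : ℤ))

theorem fpos_chain (m : ℕ) (hm : 1 ≤ m) (t : ℕ) (ht : t < 8 * m) :
    grid2 (fpos m t) (fpos m (t + 1)) := by
  unfold fpos
  split_ifs <;> exact grid2_mk' _ _ _ _ (by omega)

theorem fpos_zero (m : ℕ) : fpos m 0 = ((m : ℤ), -(m : ℤ)) := by
  unfold fpos
  rw [if_pos (by omega)]
  congr 1
  omega

theorem fpos_last (m : ℕ) (hm : 1 ≤ m) : fpos m (8 * m) = ((m : ℤ), -(m : ℤ)) := by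
  unfold fpos
  rw [if_neg (by omega), if_neg (by omega), if_neg (by omega)]
  refine Prod.ext_iff.mpr ⟨?_, rfl⟩
  dsimp only
  omega

theorem fpos_norm (m : ℕ) (hm : 1 ≤ m) (t : ℕ) (ht : t ≤ 8 * m) :
    (fpos m t).1.natAbs ≤ m ∧ (fpos m t).2.natAbs ≤ m ∧
      (m ≤ (fpos m t).1.natAbs ∨ m ≤ (fpos m t).2.natAbs) := by
  unfold fpos
  split_ifs <;> refine ⟨?_, ?_, ?_⟩ <;> dsimp only <;> omega

def rt (c : ℕ → V) (a : V) (M : ℕ) : ℕ → V := fun t =>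
  if t ≤ M then c t else if t % 2 = 0 then a else c (M - 1)

def flist (c : ℕ → V) (a : V) (M : ℕ) (N : ℕ) : List V :=
  (List.range (N + 1)).map (rt c a M)

theorem patt_fpos (c : ℕ → V) (a : V) (M : ℕ) (h0 : c 0 = a) (m : ℕ)
    (hm : M + 3 ≤ m) (t : ℕ) (ht : t ≤ 8 * m) :
    patt c a M (fpos m t) = rt c a M t := by
  rcases le_or_gt t M with h1 | h1
  · have e : fpos m t = ((m : ℤ), (t : ℤ) - m) := by
      unfold fpos; rw [if_pos (by omega)]
    rw [e]
    unfold patt rt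
    rw [if_pos (by dsimp only; omega), if_pos h1]
    dsimp only
    congr 1
    omega
  · have hrt : rt c a M t = if t % 2 = 0 then a else c (M - 1) := by
      unfold rt; rw [if_neg (by omega)]
    rcases le_or_gt t (2 * m) with h2 | h2
    · have e : fpos m t = ((m : ℤ), (t : ℤ) - m) := by
        unfold fpos; rw [if_pos (by omega)]
      rw [e, hrt]
      unfold patt
      rw [if_neg (by dsimp only; omega)]
      dsimp only
      by_cases hp : t % 2 = 0
      · rw [if_pos (by omega), if_pos hp]
      · rw [if_neg (by omega), if_neg hp]
    · rcases le_or_gt t (4 * m) with h3 | h3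
      · have e : fpos m t = (3 * (m : ℤ) - t, (m : ℤ)) := by
          unfold fpos; rw [if_neg (by omega), if_pos (by omega)]
        rw [e, hrt]
        unfold patt
        rw [if_neg (by dsimp only; omega)]
        dsimp only
        by_cases hp : t % 2 = 0
        · rw [if_pos (by omega), if_pos hp]
        · rw [if_neg (by omega), if_neg hp]
      · rcases le_or_gt t (6 * m) with h4 | h4
        · have e : fpos m t = (-(m : ℤ), 5 * (m : ℤ) - t) := by
            unfold fpos; rw [if_neg (by omega), if_neg (by omega), if_pos (by omega)]
          rw [e, hrt]
          unfold patt
          rw [if_neg (by dsimp only; omega)]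
          dsimp only
          by_cases hp : t % 2 = 0
          · rw [if_pos (by omega), if_pos hp]
          · rw [if_neg (by omega), if_neg hp]
        · rcases eq_or_lt_of_le ht with h5 | h5
          · subst h5
            rw [fpos_last m (by omega), hrt]
            unfold patt
            rw [if_pos (by dsimp only; omega)]
            dsimp only
            rw [if_pos (by omega)]
            have e2 : ((m : ℤ) + -(m : ℤ)).toNat = 0 := by omega
            rw [e2, h0]
          · have e : fpos m t = ((t : ℤ) - 7 * m, -(m : ℤ)) := by
              unfold fpos; rw [if_neg (by omega), if_neg (by omega), if_neg (by omega)]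
            rw [e, hrt]
            unfold patt
            rw [if_neg (by dsimp only; omega)]
            dsimp only
            by_cases hp : t % 2 = 0
            · rw [if_pos (by omega), if_pos hp]
            · rw [if_neg (by omega), if_neg hp]

section Flist

variable {G : V → V → Prop} (hsym : Symmetric G) (c : ℕ → V) (a : V) (M : ℕ)
  (hadjc : ∀ k : ℕ, k < M → G (c k) (c (k + 1))) (h0 : c 0 = a) (hM : c M = a)
  (hM2 : 2 ≤ M) (hMe : M % 2 = 0)

include hsym hadjc h0 hM hM2 hMe

theorem flist_reduce : ∀ K : ℕ, SquareEquiv G (flist c a M (M + 2 * K)) (flist c a M M) := by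
  intro K
  induction K with
  | zero => simp only [Nat.mul_zero, Nat.add_zero]; exact Relation.ReflTransGen.refl
  | succ K ih =>
    have hrt1 : rt c a M (M + 2 * K + 1) = c (M - 1) := by
      unfold rt
      rw [if_neg (by omega), if_neg (by omega)]
    have hrt2 : rt c a M (M + 2 * K + 2) = a := by
      unfold rt
      rw [if_neg (by omega), if_pos (by omega)]
    have hrt0 : rt c a M (M + 2 * K) = a := by
      unfold rt
      rcases Nat.eq_zero_or_pos K with rfl | hK
      · rw [if_pos (by omega)]
        have e : M + 2 * 0 = M := by omega
        rw [e, hM]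
      · rw [if_neg (by omega), if_pos (by omega)]
    have e1 : flist c a M (M + 2 * (K + 1)) =
        ((List.range (M + 2 * K)).map (rt c a M) ++ [a]) ++ [c (M - 1), a] := by
      unfold flist
      have h1 : M + 2 * (K + 1) + 1 = ((M + 2 * K + 1) + 1) + 1 := by omega
      rw [h1, List.range_succ, List.range_succ, List.range_succ, List.map_append,
        List.map_append, List.map_append]
      simp only [List.map_cons, List.map_nil]
      rw [hrt0, hrt1]
      have h2 : M + 2 * K + 1 + 1 = M + 2 * K + 2 := by omega
      rw [h2, hrt2]
      simp
    have e2 : flist c a M (M + 2 * K) = (List.range (M + 2 * K)).map (rt c a M) ++ [a] := by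
      unfold flist
      rw [List.range_succ, List.map_append]
      simp only [List.map_cons, List.map_nil]
      rw [hrt0]
    rw [e1]
    rw [e2] at ih
    have step : SqStep G ((List.range (M + 2 * K)).map (rt c a M) ++ [a])
        (((List.range (M + 2 * K)).map (rt c a M) ++ [a]) ++ [c (M - 1), a]) := by
      have := SqStep.backtrack (G := G) ((List.range (M + 2 * K)).map (rt c a M)) []
        a (c (M - 1)) (patt_G_aM1 hsym c a M hadjc h0 hM hM2 hMe)
        (patt_G_M1a hsym c a M hadjc h0 hM hM2 hMe)
      simpa using this
    exact sqe_trans (sqe_del step) ih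

end Flist

theorem flist_eq (p : List V) (a : V) (hne : p ≠ []) :
    flist (fun k => p.getD k a) a (p.length - 1) (p.length - 1) = p := by
  have hlen : 1 ≤ p.length := List.length_pos_iff.mpr hne
  apply List.ext_getElem
  · simp only [flist, List.length_map, List.length_range]
    omega
  · intro i h1 h2
    simp only [flist, List.getElem_map, List.getElem_range]
    have hi : i ≤ p.length - 1 := by
      simp only [flist, List.length_map, List.length_range] at h1
      omega
    unfold rt
    rw [if_pos hi]
    exact List.getD_eq_getElem p a h2

theorem mem_box2_iff (k : ℕ) (u : ℤ × ℤ) : u ∈ box2 k ↔ u.1.natAbs ≤ k ∧ u.2.natAbs ≤ k := by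
  simp only [box2, Set.mem_setOf_eq, Int.abs_eq_natAbs]
  omega


/-- If the two-dimensional homshift `X²_G` has the box-extension
property, then every even-length cycle of `G` is square-decomposable. -/
theorem evenSquareGroup_trivial_of_boxExtension {V : Type} [Fintype V] (G : V → V → Prop)
    (hsym : Symmetric G) (hconn : GraphConnected G) (hbox : BoxExtension G) :
    ∀ p : List V, IsCycle G p → Even (walkLen p) → IsSquareDecomposable G p := by
  intro p hcyc heven
  obtain ⟨⟨hne, hchain⟩, hclosed⟩ := hcyc
  refine ⟨p.head hne, List.head?_eq_head hne, ?_⟩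
  by_cases hlen1 : p.length = 1
  · obtain ⟨b, rfl⟩ := List.length_eq_one_iff.mp hlen1
    exact Relation.ReflTransGen.refl
  · have hlenpos : 1 ≤ p.length := List.length_pos_iff.mpr hne
    set M := p.length - 1 with hMdef
    have hMeN : M % 2 = 0 := by
      have h := heven
      unfold walkLen at h
      obtain ⟨w, hw⟩ := h
      omega
    have hM2 : 2 ≤ M := by omega
    set c : ℕ → V := fun k => p.getD k (p.head hne) with hcdef
    have h0 : c 0 = p.head hne := by
      rw [hcdef]
      dsimp only
      rw [List.getD_eq_getElem p _ (by omega)]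
      exact (List.head_eq_getElem hne).symm
    have hMval : c M = p.head hne := by
      rw [hcdef]
      dsimp only
      rw [List.getD_eq_getElem p _ (by omega)]
      have h2 : p.getLast? = some (p.getLast hne) := List.getLast?_eq_getLast_of_ne_nil hne
      rw [← hclosed, List.head?_eq_head hne, Option.some.injEq] at h2
      rw [h2, List.getLast_eq_getElem]
    have hadjc : ∀ k : ℕ, k < M → G (c k) (c (k + 1)) := by
      intro k hk
      have h1 : k < p.length := by omega
      have h2 : k + 1 < p.length := by omega
      have h3 := List.isChain_iff_getElem.mp hchain k (by omega)
      rw [hcdef]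
      dsimp only
      rw [List.getD_eq_getElem p _ h1, List.getD_eq_getElem p _ h2]
      simpa [List.get_eq_getElem] using h3
    obtain ⟨r, hr1, hB⟩ := hbox
    set n := M + 2 with hndef
    set m := n + r + 1 with hmdef
    have hm3 : M + 3 ≤ m := by omega
    have hm1 : 1 ≤ m := by omega
    have hE : ∀ u : ℤ × ℤ, u ∉ box2 n → ((M : ℤ) + 2 < |u.1| ∨ (M : ℤ) + 2 < |u.2|) := by
      intro u hu
      simp only [mem_box2_iff] at hu
      rw [Int.abs_eq_natAbs, Int.abs_eq_natAbs]
      omega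
    have hloc : ∀ u v : ℤ × ℤ, u ∉ box2 n → v ∉ box2 n →
        |u.1 - v.1| + |u.2 - v.2| = 1 →
        G (patt c (p.head hne) M u) (patt c (p.head hne) M v) :=
      fun u v hu hv hd =>
        patt_adj hsym c _ M hadjc h0 hMval hM2 hMeN u v (hE u hu) (hE v hv) hd
    have hmono : ∀ u : ℤ × ℤ, u ∉ box2 (n + r) → u ∉ box2 n := by
      intro u hu hcon
      refine hu ?_
      simp only [mem_box2_iff] at hcon ⊢
      omega
    obtain ⟨x, hx, hxeq⟩ := hB n (patt c (p.head hne) M)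
      (fun u hu v hv hd => hloc u v (hmono u hu.2) (hmono v hv.2) hd)
      ⟨patt c (p.head hne) M, fun u hu v hv hd => hloc u v hu.2 hv.2 hd, fun u _ => rfl⟩
    set Λ := (List.range (8 * m + 1)).map (fpos m) with hΛ
    have hΛc : List.Chain' grid2 Λ := by
      rw [hΛ]
      refine (List.isChain_map (fpos m)).mpr ?_
      exact (List.isChain_range_succ _ (8 * m)).mpr (fun t ht => fpos_chain m hm1 t ht)
    have hΛh : Λ.head? = some ((m : ℤ), -(m : ℤ)) := by
      rw [hΛ, List.head?_map, List.range_succ_eq_map, List.head?_cons, Option.map_some,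
        fpos_zero]
    have hΛl : Λ.getLast? = some ((m : ℤ), -(m : ℤ)) := by
      rw [hΛ, List.getLast?_map, List.range_succ, List.getLast?_concat, Option.map_some,
        fpos_last m hm1]
    have hnull := grid2_null Λ ((m : ℤ), -(m : ℤ)) hΛc hΛh hΛl
    have hpush : SquareEquiv G (Λ.map x) [x ((m : ℤ), -(m : ℤ))] :=
      sqe_map x (fun u v h => hx u v h) (fun u v h => hx v u (grid2_symm h)) hnull
    have hframe : ∀ t : ℕ, t ≤ 8 * m → x (fpos m t) = rt c (p.head hne) M t := by
      intro t ht
      have hnorm := fpos_norm m hm1 t ht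
      have hn1 : fpos m t ∈ box2 (n + r + 1) \ box2 (n + r) := by
        simp only [Set.mem_diff, mem_box2_iff]
        omega
      rw [hxeq _ hn1]
      exact patt_fpos c (p.head hne) M h0 m hm3 t ht
    have hmapx : Λ.map x = flist c (p.head hne) M (8 * m) := by
      rw [hΛ, List.map_map]
      unfold flist
      refine List.map_congr_left ?_
      intro t ht
      rw [List.mem_range] at ht
      exact hframe t (by omega)
    obtain ⟨K, hK⟩ : ∃ K, M + 2 * K = 8 * m := ⟨(8 * m - M) / 2, by omega⟩
    have hred : SquareEquiv G (flist c (p.head hne) M (8 * m)) (flist c (p.head hne) M M) := by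
      have h7 := flist_reduce (G := G) hsym c (p.head hne) M hadjc h0 hMval hM2 hMeN K
      simp only [hK] at h7
      exact h7
    have hfe : flist c (p.head hne) M M = p := flist_eq p (p.head hne) hne
    have e3 : SquareEquiv G p (flist c (p.head hne) M (8 * m)) := by
      have h8 := sqe_symm hred
      rwa [hfe] at h8
    rw [← hmapx] at e3
    have hxa : x ((m : ℤ), -(m : ℤ)) = p.head hne := by
      have h6 := hframe 0 (by omega)
      rw [fpos_zero] at h6
      rw [h6]
      unfold rt
      rw [if_pos (by omega), h0]
    rw [hxa] at hpush
    exact sqe_trans e3 hpush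
end

section
/- Let H be the graph with vertex set {0,1} and a single edge between 0 and 1. The two-dimensional homshift X²_H contains exactly two configurations x and y, where x(n) = 0 for |n|_1 even and x(n) = 1 for |n|_1 odd, and y = σ^{e1}(x). The map c : Z² × X²_H → F₂ (the free group on generators α, β) determined by the cocycle equation and by c(e1, x) = c(e2, x) = α and c(e1, y) = c(e2, y) = β is a continuous cocycle which is NOT continuously cohomologous to a group homomorphism: there is no map b : X²_H → F₂ and homomorphism h : Z² → F₂ with c(n, z) = b(σ^n z)^{-1} · h(n) · b(z) for all n, z. However, there exist a group 𝔾, an injective group homomorphism ι : F₂ → 𝔾, a group homomorphism h : Z² → 𝔾 and a map b : X²_H → 𝔾 such that ι(c(n, z)) = b(σ^n z)^{-1} · h(n) · b(z) for all n ∈ Z² and z ∈ X²_H. -/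
variable {V : Type}

/-- A configuration of the `d`-dimensional homshift on `G`: a graph homomorphism
from the grid `ℤ^d` to `G`. -/
def IsHomConfig (G : V → V → Prop) (d : ℕ) (x : (Fin d → ℤ) → V) : Prop :=
  ∀ u v : Fin d → ℤ, (∑ i, |u i - v i|) = 1 → G (x u) (x v)

/-- The `d`-dimensional homshift on `G`, as a set of configurations. -/
def homSet (G : V → V → Prop) (d : ℕ) : Set ((Fin d → ℤ) → V) := {x | IsHomConfig G d x}

/-- The graph `H` with two vertices `0` (= `false`) and `1` (= `true`) and a single
edge between them. -/
def Hrel : Bool → Bool → Prop := fun u v => u ≠ v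

/-- The standard basis vectors of `ℤ²`. -/
def ed1 : Fin 2 → ℤ := fun i => if i = 0 then 1 else 0

def ed2 : Fin 2 → ℤ := fun i => if i = 1 then 1 else 0

/-- The chessboard configuration `x` with `x n = 0` for `|n|₁` even. -/
def xchess : (Fin 2 → ℤ) → Bool := fun n => decide (Odd (n 0 + n 1))

/-- The cocycle `c` admits a trivialization after an injective group homomorphism of
`F₂` into a larger group `Γ`. -/
def EmbeddedTrivialization (Γ : Type) [Group Γ]
    (c : (Fin 2 → ℤ) → ((Fin 2 → ℤ) → Bool) → FreeGroup Bool) : Prop :=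
  ∃ ι : FreeGroup Bool →* Γ, Function.Injective ι ∧
    ∃ (h : (Fin 2 → ℤ) → Γ) (b : ((Fin 2 → ℤ) → Bool) → Γ),
      (∀ m n : Fin 2 → ℤ, h (m + n) = h m * h n) ∧
      ∀ (n : Fin 2 → ℤ) (z : (Fin 2 → ℤ) → Bool), IsHomConfig Hrel 2 z →
        ι (c n z) = (b (shiftc n z))⁻¹ * h n * b z

lemma MY_parity_ne (s t : ℤ) (h : (s - t) % 2 = 1) : decide (Odd t) = !decide (Odd s) := by
  rw [← decide_not, decide_eq_decide, Int.odd_iff, Int.odd_iff]; omega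
lemma MY_parity_eq (s t : ℤ) (h : (s - t) % 2 = 0) : decide (Odd s) = decide (Odd t) := by
  rw [decide_eq_decide, Int.odd_iff, Int.odd_iff]; omega
lemma MY_notxor (p q : Bool) : (!(p ^^ q)) = ((!p) ^^ q) := by cases p <;> cases q <;> rfl

lemma MY_step1 {z : (Fin 2 → ℤ) → Bool} (hz : IsHomConfig Hrel 2 z) (n : Fin 2 → ℤ) :
    z (n + ed1) = !(z n) := by
  have h := hz (n + ed1) n (by simp [Fin.sum_univ_two, ed1])
  revert h; unfold Hrel; cases z (n + ed1) <;> cases z n <;> simp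

lemma MY_step2 {z : (Fin 2 → ℤ) → Bool} (hz : IsHomConfig Hrel 2 z) (n : Fin 2 → ℤ) :
    z (n + ed2) = !(z n) := by
  have h := hz (n + ed2) n (by simp [Fin.sum_univ_two, ed2])
  revert h; unfold Hrel; cases z (n + ed2) <;> cases z n <;> simp

def vab (a b : ℤ) : Fin 2 → ℤ := fun i => if i = 0 then a else b

lemma MY_vab_add1 (a b : ℤ) : vab a b + ed1 = vab (a + 1) b := by
  funext i; fin_cases i <;> simp [vab, ed1]
lemma MY_vab_add2 (a b : ℤ) : vab a b + ed2 = vab a (b + 1) := by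
  funext i; fin_cases i <;> simp [vab, ed2]
lemma MY_vab00 : vab 0 0 = (0 : Fin 2 → ℤ) := by
  funext i; simp [vab]

lemma MY_key1 {z : (Fin 2 → ℤ) → Bool} (hz : IsHomConfig Hrel 2 z) (a : ℤ) :
    z (vab a 0) = xor (decide (Odd a)) (z 0) := by
  induction a using Int.induction_on with
  | zero => simp [MY_vab00, Int.odd_iff]
  | succ a ih =>
      have h := MY_step1 hz (vab a 0)
      rw [MY_vab_add1] at h
      rw [h, ih, MY_parity_ne (a : ℤ) (a + 1) (by omega), MY_notxor]
  | pred a ih =>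
      have h := MY_step1 hz (vab (-a - 1) 0)
      rw [MY_vab_add1] at h
      have e : -(a : ℤ) - 1 + 1 = -a := by ring
      rw [e] at h
      have h2 : z (vab (-(a : ℤ) - 1) 0) = !(z (vab (-(a : ℤ)) 0)) := by
        rw [h]; simp
      rw [h2, ih, MY_parity_ne (-(a : ℤ)) (-a - 1) (by omega), MY_notxor]

lemma MY_key {z : (Fin 2 → ℤ) → Bool} (hz : IsHomConfig Hrel 2 z) (a b : ℤ) :
    z (vab a b) = xor (decide (Odd (a + b))) (z 0) := by
  induction b using Int.induction_on with
  | zero => simpa using MY_key1 hz a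
  | succ b ih =>
      have h := MY_step2 hz (vab a b)
      rw [MY_vab_add2] at h
      rw [h, ih, MY_parity_ne (a + b) (a + (b + 1)) (by omega), MY_notxor]
  | pred b ih =>
      have h := MY_step2 hz (vab a (-b - 1))
      rw [MY_vab_add2] at h
      have e : -(b : ℤ) - 1 + 1 = -b := by ring
      rw [e] at h
      have h2 : z (vab a (-(b : ℤ) - 1)) = !(z (vab a (-(b : ℤ)))) := by
        rw [h]; simp
      rw [h2, ih, MY_parity_ne (a + -(b : ℤ)) (a + (-b - 1)) (by omega), MY_notxor]

lemma MY_eq_vab (n : Fin 2 → ℤ) : n = vab (n 0) (n 1) := by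
  funext i; fin_cases i <;> simp [vab]

lemma MY_x0 : xchess 0 = false := by
  simp [xchess, Int.odd_iff]

lemma MY_shift_val (n j : Fin 2 → ℤ) : shiftc n xchess j = decide (Odd (n 0 + j 0 + (n 1 + j 1))) := rfl

lemma MY_y_val (j : Fin 2 → ℤ) : shiftc ed1 xchess j = !xchess j := by
  rw [MY_shift_val]
  show decide (Odd (1 + j 0 + (0 + j 1))) = _
  exact MY_parity_ne (j 0 + j 1) _ (by omega)

lemma MY_y0 : shiftc ed1 xchess 0 = true := by
  rw [MY_y_val, MY_x0]; rfl

lemma MY_classify {z : (Fin 2 → ℤ) → Bool} (hz : IsHomConfig Hrel 2 z) :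
    z = xchess ∨ z = shiftc ed1 xchess := by
  cases h0 : z 0 with
  | false =>
      left; funext n
      rw [MY_eq_vab n, MY_key hz, h0, ← MY_eq_vab n]
      cases h : xchess n <;> simp [xchess] at h ⊢ <;> exact h
  | true =>
      right; funext n
      rw [MY_eq_vab n, MY_key hz, h0, ← MY_eq_vab n, MY_y_val]
      show (xchess n ^^ true) = _
      cases xchess n <;> rfl

lemma MY_hom_x : IsHomConfig Hrel 2 xchess := by
  intro u v h
  rw [Fin.sum_univ_two] at h
  have hp : ((u 0 + u 1) - (v 0 + v 1)) % 2 = 1 := by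
    rcases abs_cases (u 0 - v 0) with ⟨e1, _⟩ | ⟨e1, _⟩ <;>
      rcases abs_cases (u 1 - v 1) with ⟨e2, _⟩ | ⟨e2, _⟩ <;> omega
  have := MY_parity_ne _ _ hp
  unfold Hrel xchess
  intro heq
  rw [this] at heq
  cases hh : decide (Odd (u 0 + u 1)) <;> rw [hh] at heq <;> simp at heq

lemma MY_hom_shift {z : (Fin 2 → ℤ) → Bool} (hz : IsHomConfig Hrel 2 z) (n : Fin 2 → ℤ) :
    IsHomConfig Hrel 2 (shiftc n z) := by
  intro u v h
  refine hz (n + u) (n + v) ?_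
  have e : ∀ i : Fin 2, |(n + u) i - (n + v) i| = |u i - v i| := by
    intro i; show |n i + u i - (n i + v i)| = _; congr 1; ring
  calc (∑ i, |(n + u) i - (n + v) i|) = ∑ i, |u i - v i| := by
        exact Finset.sum_congr rfl fun i _ => e i
    _ = 1 := h

lemma MY_x_ne_y : xchess ≠ shiftc ed1 xchess := by
  intro h
  have := congrFun h 0
  rw [MY_x0, MY_y0] at this
  exact Bool.noConfusion this

lemma MY_shift_comp {A : Type} (m n : Fin 2 → ℤ) (z : (Fin 2 → ℤ) → A) :
    shiftc m (shiftc n z) = shiftc (m + n) z := by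
  funext j
  show z (n + (m + j)) = z (m + n + j)
  congr 1; abel

lemma MY_shift_zero {A : Type} (z : (Fin 2 → ℤ) → A) : shiftc 0 z = z := by
  funext j; show z (0 + j) = z j; rw [zero_add]

lemma MY_e2x : shiftc ed2 xchess = shiftc ed1 xchess := by
  funext j
  rw [MY_shift_val, MY_shift_val]
  apply MY_parity_eq
  simp [ed1, ed2]; omega

lemma MY_ye1 : shiftc ed1 (shiftc ed1 xchess) = xchess := by
  rw [MY_shift_comp]
  funext j
  rw [MY_shift_val]
  show _ = decide (Odd (j 0 + j 1))
  apply MY_parity_eq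
  show ((ed1 + ed1) 0 + j 0 + ((ed1 + ed1) 1 + j 1) - (j 0 + j 1)) % 2 = 0
  simp [ed1]

lemma MY_ye2 : shiftc ed2 (shiftc ed1 xchess) = xchess := by
  rw [MY_shift_comp]
  funext j
  rw [MY_shift_val]
  show _ = decide (Odd (j 0 + j 1))
  apply MY_parity_eq
  show ((ed2 + ed1) 0 + j 0 + ((ed2 + ed1) 1 + j 1) - (j 0 + j 1)) % 2 = 0
  simp [ed1, ed2]; omega

lemma MY_hed1 : ed1 0 + ed1 1 = 1 := by simp [ed1]
lemma MY_hed2 : ed2 0 + ed2 1 = 1 := by simp [ed2]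

def MY_pi : Equiv.Perm Bool := ⟨Bool.not, Bool.not, Bool.not_not, Bool.not_not⟩

def MY_phi : Equiv.Perm Bool →* MulAut (FreeGroup Bool) :=
  MonoidHom.mk' (fun e => FreeGroup.freeGroupCongr e)
    (fun e f => (FreeGroup.freeGroupCongr_trans f e).symm)

abbrev MY_Gamma : Type := SemidirectProduct (FreeGroup Bool) (Equiv.Perm Bool) MY_phi

def MY_g : MY_Gamma := SemidirectProduct.inr MY_pi

lemma MY_pi_inv : MY_pi⁻¹ = MY_pi := rfl

lemma MY_g_inv : MY_g⁻¹ = MY_g := by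
  show (SemidirectProduct.inr MY_pi)⁻¹ = _
  rw [← map_inv, MY_pi_inv]
  rfl

lemma MY_conj : MY_g * SemidirectProduct.inl (FreeGroup.of false) * MY_g
    = SemidirectProduct.inl (FreeGroup.of true) := by
  have h := SemidirectProduct.inl_aut (φ := MY_phi) MY_pi (FreeGroup.of false)
  have hval : MY_phi MY_pi (FreeGroup.of false) = FreeGroup.of true := by
    show FreeGroup.freeGroupCongr MY_pi (FreeGroup.of false) = _
    simp [MY_pi]
  rw [hval, MY_pi_inv] at h
  show SemidirectProduct.inr MY_pi * SemidirectProduct.inl (FreeGroup.of false) *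
      SemidirectProduct.inr MY_pi = _
  exact h.symm

def MY_t : MY_Gamma := MY_g * SemidirectProduct.inl (FreeGroup.of false)
def MY_b : ((Fin 2 → ℤ) → Bool) → MY_Gamma := fun z => if z 0 = true then MY_g else 1
def MY_h : (Fin 2 → ℤ) → MY_Gamma := fun n => MY_t ^ (n 0 + n 1)

lemma MY_bx : MY_b xchess = 1 := by simp [MY_b, MY_x0]
lemma MY_by : MY_b (shiftc ed1 xchess) = MY_g := by simp [MY_b, MY_y0]

lemma MY_hadd (m n : Fin 2 → ℤ) : MY_h (m + n) = MY_h m * MY_h n := by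
  show MY_t ^ (m 0 + n 0 + (m 1 + n 1)) = MY_t ^ (m 0 + m 1) * MY_t ^ (n 0 + n 1)
  rw [show m 0 + n 0 + (m 1 + n 1) = m 0 + m 1 + (n 0 + n 1) by ring, zpow_add]

lemma MY_hneg (m : Fin 2 → ℤ) : MY_h (-m) = (MY_h m)⁻¹ := by
  show MY_t ^ (-(m 0) + -(m 1)) = (MY_t ^ (m 0 + m 1))⁻¹
  rw [show -(m 0) + -(m 1) = -(m 0 + m 1) by ring, zpow_neg]

lemma MY_hed1' : MY_h ed1 = MY_t := by
  show MY_t ^ (ed1 0 + ed1 1) = MY_t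
  rw [MY_hed1, zpow_one]

lemma MY_hed2' : MY_h ed2 = MY_t := by
  show MY_t ^ (ed2 0 + ed2 1) = MY_t
  rw [MY_hed2, zpow_one]

lemma MY_h0 : MY_h 0 = 1 := by
  show MY_t ^ ((0 : ℤ) + 0) = 1
  norm_num

/-- The homshift `X²_H` on the single-edge graph `H` consists of
exactly the two chessboard configurations `x` and `y = σ^{e1} x`. Any map `c` with
values in `F₂ = FreeGroup Bool` satisfying the cocycle equation on `X²_H` and
`c(e1,x) = c(e2,x) = α`, `c(e1,y) = c(e2,y) = β` is a continuous cocycle; it is not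
continuously cohomologous to a group homomorphism with values in `F₂`, but it becomes
cohomologous to one after an injective group homomorphism into a larger group `Γ`. -/
theorem freegroup_cocycle_on_two_point_homshift
    (c : (Fin 2 → ℤ) → ((Fin 2 → ℤ) → Bool) → FreeGroup Bool)
    (hcoc : ∀ (m n : Fin 2 → ℤ) (z : (Fin 2 → ℤ) → Bool), IsHomConfig Hrel 2 z →
      c (m + n) z = c m (shiftc n z) * c n z)
    (h1 : c ed1 xchess = FreeGroup.of false)
    (h2 : c ed2 xchess = FreeGroup.of false)
    (h3 : c ed1 (shiftc ed1 xchess) = FreeGroup.of true)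
    (h4 : c ed2 (shiftc ed1 xchess) = FreeGroup.of true) :
    (IsHomConfig Hrel 2 xchess ∧ IsHomConfig Hrel 2 (shiftc ed1 xchess) ∧
      xchess ≠ shiftc ed1 xchess ∧
      ∀ z : (Fin 2 → ℤ) → Bool, IsHomConfig Hrel 2 z →
        z = xchess ∨ z = shiftc ed1 xchess) ∧
    (∀ n : Fin 2 → ℤ, @ContinuousOn _ _ (cfgTop Bool 2) ⊥ (c n) (homSet Hrel 2)) ∧
    (¬ ∃ (b : ((Fin 2 → ℤ) → Bool) → FreeGroup Bool)
        (h : (Fin 2 → ℤ) → FreeGroup Bool),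
        (∀ m n : Fin 2 → ℤ, h (m + n) = h m * h n) ∧
        ∀ (n : Fin 2 → ℤ) (z : (Fin 2 → ℤ) → Bool), IsHomConfig Hrel 2 z →
          c n z = (b (shiftc n z))⁻¹ * h n * b z) ∧
    (∃ (Γ : Type) (g : Group Γ), @EmbeddedTrivialization Γ g c) := by
  have c0 : ∀ z, IsHomConfig Hrel 2 z → c 0 z = 1 := by
    intro z hz
    have h5 := hcoc 0 0 z hz
    rw [MY_shift_zero, add_zero] at h5
    exact right_eq_mul.mp h5
  refine ⟨⟨MY_hom_x, MY_hom_shift MY_hom_x ed1, MY_x_ne_y, fun z hz => MY_classify hz⟩,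
    ?_, ?_, ?_⟩
  · -- continuity
    intro n a ha
    letI : TopologicalSpace Bool := ⊥
    haveI : DiscreteTopology Bool := ⟨rfl⟩
    letI tF : TopologicalSpace (FreeGroup Bool) := ⊥
    haveI : DiscreteTopology (FreeGroup Bool) := ⟨rfl⟩
    unfold ContinuousWithinAt
    rw [nhds_discrete, Filter.tendsto_pure]
    have hopen : @IsOpen _ (cfgTop Bool 2) {w : (Fin 2 → ℤ) → Bool | w 0 = a 0} := by
      have hc : @Continuous _ _ (cfgTop Bool 2) _ (fun w : (Fin 2 → ℤ) → Bool => w 0) :=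
        continuous_apply 0
      exact hc.isOpen_preimage {a 0} (isOpen_discrete _)
    have hmem : {w : (Fin 2 → ℤ) → Bool | w 0 = a 0} ∈
        @nhdsWithin _ (cfgTop Bool 2) a (homSet Hrel 2) :=
      mem_nhdsWithin_of_mem_nhds (hopen.mem_nhds rfl)
    refine Filter.mem_of_superset (Filter.inter_mem hmem self_mem_nhdsWithin) ?_
    rintro w ⟨hw0, hwS⟩
    have hw : w = a := by
      have hw0' : w 0 = a 0 := hw0
      rcases MY_classify hwS with rfl | rfl <;> rcases MY_classify ha with rfl | rfl
      · rfl
      · rw [MY_x0, MY_y0] at hw0'; exact absurd hw0' (by simp)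
      · rw [MY_x0, MY_y0] at hw0'; exact absurd hw0' (by simp)
      · rfl
    show c n w = c n a
    rw [hw]
  · -- nonexistence
    rintro ⟨b, h, hadd, heq⟩
    have hy : IsHomConfig Hrel 2 (shiftc ed1 xchess) := MY_hom_shift MY_hom_x ed1
    have A1 := heq ed1 xchess MY_hom_x
    have A2 := heq ed1 (shiftc ed1 xchess) hy
    rw [h1] at A1
    rw [h3, MY_ye1] at A2
    have hh : h ed1 = b (shiftc ed1 xchess) * FreeGroup.of false * (b xchess)⁻¹ := by
      rw [A1]; group
    have hE : FreeGroup.of true = ((b xchess)⁻¹ * b (shiftc ed1 xchess)) * FreeGroup.of false *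
        ((b xchess)⁻¹ * b (shiftc ed1 xchess)) := by
      rw [A2, hh]; group
    set φ := FreeGroup.lift (fun v : Bool => Multiplicative.ofAdd (if v then (0 : ℤ) else 1))
      with hφ
    obtain ⟨g0, hg0⟩ : ∃ g0, (b xchess)⁻¹ * b (shiftc ed1 xchess) = g0 := ⟨_, rfl⟩
    rw [hg0] at hE
    have key1 : φ (FreeGroup.of true) = Multiplicative.ofAdd (0 : ℤ) := by
      rw [hφ, FreeGroup.lift_apply_of]; norm_num
    have key2 : φ (FreeGroup.of false) = Multiplicative.ofAdd (1 : ℤ) := by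
      rw [hφ, FreeGroup.lift_apply_of]; norm_num
    have t1 := congrArg (fun w => Multiplicative.toAdd (φ w)) hE
    simp only [map_mul, key1, key2, toAdd_mul, toAdd_ofAdd] at t1
    generalize Multiplicative.toAdd (φ g0) = k at t1
    omega
  · -- embedded trivialization
    refine ⟨MY_Gamma, inferInstance, SemidirectProduct.inl, SemidirectProduct.inl_injective,
      MY_h, MY_b, MY_hadd, ?_⟩
    have Pe1 : ∀ z, IsHomConfig Hrel 2 z →
        SemidirectProduct.inl (c ed1 z) = (MY_b (shiftc ed1 z))⁻¹ * MY_h ed1 * MY_b z := by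
      intro z hz
      rcases MY_classify hz with rfl | rfl
      · rw [h1, MY_hed1', MY_by, MY_bx, mul_one,
          show MY_t = MY_g * SemidirectProduct.inl (FreeGroup.of false) from rfl]
        group
      · rw [h3, MY_ye1, MY_hed1', MY_bx, MY_by, inv_one, one_mul,
          show MY_t = MY_g * SemidirectProduct.inl (FreeGroup.of false) from rfl]
        rw [← MY_conj]
    have Pe2 : ∀ z, IsHomConfig Hrel 2 z →
        SemidirectProduct.inl (c ed2 z) = (MY_b (shiftc ed2 z))⁻¹ * MY_h ed2 * MY_b z := by
      intro z hz
      rcases MY_classify hz with rfl | rfl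
      · rw [h2, MY_hed2', MY_e2x, MY_by, MY_bx, mul_one,
          show MY_t = MY_g * SemidirectProduct.inl (FreeGroup.of false) from rfl]
        group
      · rw [h4, MY_ye2, MY_hed2', MY_bx, MY_by, inv_one, one_mul,
          show MY_t = MY_g * SemidirectProduct.inl (FreeGroup.of false) from rfl]
        rw [← MY_conj]
    have P0 : ∀ z, IsHomConfig Hrel 2 z →
        SemidirectProduct.inl (c 0 z) = (MY_b (shiftc 0 z))⁻¹ * MY_h 0 * MY_b z := by
      intro z hz
      rw [c0 z hz, MY_shift_zero, MY_h0, map_one]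
      group
    have Padd : ∀ m n, (∀ z, IsHomConfig Hrel 2 z →
        SemidirectProduct.inl (c m z) = (MY_b (shiftc m z))⁻¹ * MY_h m * MY_b z) →
        (∀ z, IsHomConfig Hrel 2 z →
        SemidirectProduct.inl (c n z) = (MY_b (shiftc n z))⁻¹ * MY_h n * MY_b z) →
        (∀ z, IsHomConfig Hrel 2 z →
        SemidirectProduct.inl (c (m + n) z) = (MY_b (shiftc (m + n) z))⁻¹ * MY_h (m + n) * MY_b z) := by
      intro m n hm hn z hz
      rw [hcoc m n z hz, map_mul, hm _ (MY_hom_shift hz n), hn z hz, MY_shift_comp, MY_hadd]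
      group
    have Pneg : ∀ m, (∀ z, IsHomConfig Hrel 2 z →
        SemidirectProduct.inl (c m z) = (MY_b (shiftc m z))⁻¹ * MY_h m * MY_b z) →
        (∀ z, IsHomConfig Hrel 2 z →
        SemidirectProduct.inl (c (-m) z) = (MY_b (shiftc (-m) z))⁻¹ * MY_h (-m) * MY_b z) := by
      intro m hm z hz
      have hw := MY_hom_shift hz (-m)
      have h5 := hcoc m (-m) z hz
      have e0 : m + -m = 0 := by abel
      rw [e0, c0 z hz] at h5
      have h6 : c (-m) z = (c m (shiftc (-m) z))⁻¹ := eq_inv_of_mul_eq_one_right h5.symm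
      rw [h6, map_inv, hm _ hw, MY_shift_comp, e0, MY_shift_zero, MY_hneg]
      group
    have Psmul : ∀ (k : ℤ) (e : Fin 2 → ℤ), (∀ z, IsHomConfig Hrel 2 z →
        SemidirectProduct.inl (c e z) = (MY_b (shiftc e z))⁻¹ * MY_h e * MY_b z) →
        (∀ z, IsHomConfig Hrel 2 z →
        SemidirectProduct.inl (c (k • e) z) = (MY_b (shiftc (k • e) z))⁻¹ * MY_h (k • e) * MY_b z) := by
      intro k e he
      induction k using Int.induction_on with
      | zero => rw [zero_smul]; exact P0
      | succ i ih =>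
          have e1 : ((i : ℤ) + 1) • e = (i : ℤ) • e + e := by rw [add_smul, one_smul]
          rw [e1]; exact Padd _ _ ih he
      | pred i ih =>
          have e1 : (-(i : ℤ) - 1) • e = (-(i : ℤ)) • e + -e := by
            rw [sub_smul, one_smul, sub_eq_add_neg]
          rw [e1]; exact Padd _ _ ih (Pneg e he)
    intro n z hz
    have decomp : n = n 0 • ed1 + n 1 • ed2 := by
      funext i; fin_cases i <;> simp [ed1, ed2]
    have := Padd _ _ (Psmul (n 0) ed1 Pe1) (Psmul (n 1) ed2 Pe2) z hz
    rw [← decomp] at this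
    exact this
end
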